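/- arXiv:1302.2479 — 6 statements merged into one kernel-verified Lean document; each statement's English description precedes it below -/
import Mathlib

section
/- Let D be a strongly connected digraph on n ≥ 4 vertices in which every vertex x satisfies 2·deg(x) ≥ n + 1 (i.e., all vertex degrees are at least (n+1)/2). Then D has a noncritical vertex. -/
/-- A digraph (given by its adjacency/arc relation `Adj`) is strongly connected if
every vertex can reach every other vertex by a directed path. -/
def IsStronglyConnected {V : Type*} (Adj : V → V → Prop) : Prop :=
  ∀ x y : V, Relation.ReflTransGen Adj x y

/-- The degree of a vertex `x`: the number of vertices `y ≠ x` joined to `x`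
by an arc in at least one direction. -/
noncomputable def degree {V : Type*} (Adj : V → V → Prop) (x : V) : ℕ :=
  {y : V | y ≠ x ∧ (Adj x y ∨ Adj y x)}.ncard

/-- A vertex `v` is noncritical if the digraph obtained by deleting `v`
(induced on the remaining vertices) is strongly connected. -/
def Noncritical {V : Type*} (Adj : V → V → Prop) (v : V) : Prop :=
  IsStronglyConnected (fun a b : {u : V // u ≠ v} => Adj a b)


/-!
Let `S` be a largest proper vertex set inducing a strongly connected subdigraph, and let
`f 0 → ⋯ → f (m-1)` be a shortest ear of `S`: a path outside `S`, entered from `S` and leaving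
into `S`. Maximality of `S` makes `S` and the ear cover all vertices and bounds the span of every
backward chord of the ear by `|S|`; minimality of the ear rules out forward chords, arcs from `S`
to any vertex but `f 0`, and arcs to `S` from any vertex but `f (m-1)`.

If `m = 1`, the vertex `f 0` is noncritical. If `m ≥ 3`, the vertex `f 1` has at most
`min (m - 1) (|S| + 1)` neighbours, against the degree bound. If `m = 2`, the arc `f 0 → f 1` is
the only arc leaving `f 0` and the only arc entering `f 1`. Replacing it by all arcs from the
in-neighbours of `f 0` to the out-neighbours of `f 1` gives a digraph on `S` in which any vertex
whose removal leaves it strongly connected is noncritical in the original digraph. Such a vertex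
is found by induction when the new digraph still satisfies the degree bound, by a bypass argument
at a vertex violating it, and by hand when `|S| ≤ 3`.
-/

open Relation Set

section StronglyConnectedOn

variable {V W : Type*} {R R' : V → V → Prop} {U : Set V}

def inducedOn (R : V → V → Prop) (U : Set V) (a b : V) : Prop :=
  a ∈ U ∧ b ∈ U ∧ R a b

def IsStronglyConnectedOn (R : V → V → Prop) (U : Set V) : Prop :=
  ∀ x ∈ U, ∀ y ∈ U, ReflTransGen (inducedOn R U) x y

def neighborSetIn (R : V → V → Prop) (U : Set V) (x : V) : Set V :=
  {y ∈ U | y ≠ x ∧ (R x y ∨ R y x)}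

theorem reflTransGen_inducedOn_mono {U' : Set V} (hUU' : U ⊆ U') {x y : V}
    (h : ReflTransGen (inducedOn R U) x y) : ReflTransGen (inducedOn R U') x y :=
  ReflTransGen.mono (fun _ _ ⟨ha, hb, hab⟩ => ⟨hUU' ha, hUU' hb, hab⟩) _ _ h

theorem IsStronglyConnectedOn.mono_adj (hRR' : ∀ a b, R a b → R' a b)
    (hU : IsStronglyConnectedOn R U) : IsStronglyConnectedOn R' U := fun x hx y hy =>
  ReflTransGen.mono (fun _ _ ⟨ha, hb, hab⟩ => ⟨ha, hb, hRR' _ _ hab⟩) _ _ (hU x hx y hy)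

theorem Set.Subsingleton.isStronglyConnectedOn (hU : U.Subsingleton) :
    IsStronglyConnectedOn R U :=
  fun _ hx _ hy => hU hx hy ▸ .refl

theorem isStronglyConnectedOn_pair {p q : V} (hpq : R p q) (hqp : R q p) :
    IsStronglyConnectedOn R {p, q} := by
  have hp : p ∈ ({p, q} : Set V) := mem_insert p {q}
  have hq : q ∈ ({p, q} : Set V) := mem_insert_of_mem p rfl
  rintro x (rfl | rfl) y (rfl | rfl)
  exacts [.refl, .single ⟨hp, hq, hpq⟩, .single ⟨hq, hp, hqp⟩, .refl]

theorem isStronglyConnectedOn_of_reach (a : V)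
    (h : ∀ u ∈ U, ReflTransGen (inducedOn R U) u a ∧ ReflTransGen (inducedOn R U) a u) :
    IsStronglyConnectedOn R U :=
  fun x hx y hy => (h x hx).1.trans (h y hy).2

theorem IsStronglyConnectedOn.image {R' : W → W → Prop} (f : V → W)
    (hf : ∀ a b, R a b → R' (f a) (f b)) (hU : IsStronglyConnectedOn R U) :
    IsStronglyConnectedOn R' (f '' U) := by
  rintro _ ⟨x, hx, rfl⟩ _ ⟨y, hy, rfl⟩
  exact (hU x hx y hy).lift f fun a b ⟨ha, hb, hab⟩ =>
    ⟨mem_image_of_mem f ha, mem_image_of_mem f hb, hf a b hab⟩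

theorem isStronglyConnected_subtype_iff :
    IsStronglyConnected (fun a b : U => R a b) ↔ IsStronglyConnectedOn R U := by
  constructor
  · intro h
    have := IsStronglyConnectedOn.image (U := univ) (R' := R) Subtype.val (fun _ _ hab => hab)
      fun x _ y _ => ReflTransGen.mono (fun a b hab => ⟨mem_univ a, mem_univ b, hab⟩) _ _ (h x y)
    rwa [image_univ, Subtype.range_coe] at this
  · intro h a b
    have key : ∀ {x y : V}, ReflTransGen (inducedOn R U) x y → ∀ (hx : x ∈ U) (hy : y ∈ U),
        ReflTransGen (fun a b : U => R a b) ⟨x, hx⟩ ⟨y, hy⟩ := by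
      intro x y hxy
      induction hxy with
      | refl => exact fun _ _ => .refl
      | tail _ hbc ih => exact fun hx _ => (ih hx hbc.1).tail hbc.2.2
    exact key (h a a.2 b b.2) a.2 b.2

theorem noncritical_iff {v : V} : Noncritical R v ↔ IsStronglyConnectedOn R {v}ᶜ :=
  isStronglyConnected_subtype_iff

theorem IsStronglyConnectedOn.exists_adj (hU : IsStronglyConnectedOn R U) {x y : V}
    (hx : x ∈ U) (hy : y ∈ U) (hxy : x ≠ y) : ∃ z ∈ U, R x z := by
  obtain rfl | ⟨z, ⟨-, hz, hxz⟩, -⟩ := (hU x hx y hy).cases_head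
  exacts [absurd rfl hxy, ⟨z, hz, hxz⟩]

theorem IsStronglyConnectedOn.sdiff_singleton {s : V} (hU : IsStronglyConnectedOn R U)
    (hbypass : ∀ w ∈ U \ {s}, ∀ w' ∈ U \ {s}, R w s → R s w' →
      ReflTransGen (inducedOn R (U \ {s})) w w') :
    IsStronglyConnectedOn R (U \ {s}) := by
  have key : ∀ {u v : V}, ReflTransGen (inducedOn R U) u v → u ∈ U \ {s} →
      (v ≠ s → ReflTransGen (inducedOn R (U \ {s})) u v) ∧
      (v = s → ∀ w' ∈ U \ {s}, R s w' → ReflTransGen (inducedOn R (U \ {s})) u w') := by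
    intro u v huv hu
    induction huv with
    | refl => exact ⟨fun _ => .refl, fun h => absurd h hu.2⟩
    | @tail b c _ hbc ih =>
      obtain ⟨hbU, hcU, hbc⟩ := hbc
      by_cases hb : b = s
      · subst hb
        exact ⟨fun hc => ih.2 rfl c ⟨hcU, hc⟩ hbc, fun hc => hc ▸ ih.2 rfl⟩
      · refine ⟨fun hc => (ih.1 hb).tail ⟨⟨hbU, hb⟩, ⟨hcU, hc⟩, hbc⟩, ?_⟩
        rintro rfl w' hw' hcw'
        exact (ih.1 hb).trans (hbypass b ⟨hbU, hb⟩ w' hw' hbc hcw')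
  exact fun x hx y hy => (key (hU x hx.1 y hy.1) hx).1 hy.2

theorem degree_le_ncard [Finite V] {x : V} {T : Set V}
    (h : ∀ y ≠ x, R x y ∨ R y x → y ∈ T) : degree R x ≤ T.ncard :=
  ncard_le_ncard fun y hy => h y hy.1 hy.2

theorem degree_subtype (x : U) :
    degree (fun a b : U => R a b) x = (neighborSetIn R U x).ncard := by
  rw [degree, ← ncard_image_of_injective _ Subtype.val_injective]
  congr 1
  ext y
  constructor
  · rintro ⟨y, ⟨hyx, hy⟩, rfl⟩
    exact ⟨y.2, fun h => hyx (Subtype.ext h), hy⟩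
  · rintro ⟨hyU, hyx, hy⟩
    exact ⟨⟨y, hyU⟩, ⟨fun h => hyx (congrArg Subtype.val h), hy⟩, rfl⟩

end StronglyConnectedOn

section Ear

variable {V : Type*} {Adj : V → V → Prop} {S : Set V} {m : ℕ} {f : ℕ → V}

theorem exists_path_of_reflTransGen {y a : V} (h : ReflTransGen Adj y a) (hy : y ∉ S)
    (ha : a ∈ S) :
    ∃ (m : ℕ) (f : ℕ → V), 0 < m ∧ f 0 = y ∧ (∀ t < m, f t ∉ S) ∧
      (∀ t, t + 1 < m → Adj (f t) (f (t + 1))) ∧ ∃ s ∈ S, Adj (f (m - 1)) s := by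
  induction h using ReflTransGen.head_induction_on with
  | refl => exact absurd ha hy
  | @head y c hyc _ ih =>
    by_cases hc : c ∈ S
    · exact ⟨1, fun _ => y, one_pos, rfl, fun _ _ => hy, fun t ht => by omega, c, hc, hyc⟩
    obtain ⟨m, f, hm, rfl, hfS, hf, s, hs, hfs⟩ := ih hc
    refine ⟨m + 1, fun t => if t = 0 then y else f (t - 1), by omega, rfl, ?_, ?_, s, hs, ?_⟩
    · rintro (_ | t) ht
      exacts [hy, by simpa using hfS t (by omega)]
    · rintro (_ | t) ht
      exacts [by simpa using hyc, by simpa using hf t (by omega)]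
    · simpa [hm.ne'] using hfs

structure IsEar (Adj : V → V → Prop) (S : Set V) (m : ℕ) (f : ℕ → V) : Prop where
  pos : 0 < m
  notMem : ∀ t < m, f t ∉ S
  adj_succ : ∀ t, t + 1 < m → Adj (f t) (f (t + 1))
  enter : ∃ s ∈ S, Adj s (f 0)
  exit : ∃ s ∈ S, Adj (f (m - 1)) s

theorem exists_isEar (hconn : IsStronglyConnected Adj) (hS : S.Nonempty) (hSV : S ≠ univ) :
    ∃ m f, IsEar Adj S m f := by
  obtain ⟨a, ha⟩ := hS
  obtain ⟨y, hy⟩ := (ne_univ_iff_exists_notMem S).1 hSV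
  -- the last arc of a walk from `a` into `Sᶜ` leaves `S`
  obtain ⟨k, g, hk, -, hgS, -, z, hz, hgz⟩ :=
    exists_path_of_reflTransGen (S := Sᶜ) (hconn a y) (notMem_compl_iff.2 ha) hy
  obtain ⟨m, f, hm, rfl, hfS, hf, hexit⟩ := exists_path_of_reflTransGen (hconn z a) hz ha
  exact ⟨m, f, hm, hfS, hf, ⟨_, notMem_compl_iff.1 (hgS (k - 1) (by omega)), hgz⟩, hexit⟩

namespace IsEar

theorem drop (hf : IsEar Adj S m f) {j : ℕ} (hj : j < m) {s : V} (hs : s ∈ S)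
    (hsj : Adj s (f j)) : IsEar Adj S (m - j) (fun t => f (t + j)) where
  pos := by omega
  notMem t ht := hf.notMem _ (by omega)
  adj_succ t ht := by simpa [Nat.add_right_comm] using hf.adj_succ (t + j) (by omega)
  enter := ⟨s, hs, by simpa using hsj⟩
  exit := by
    obtain ⟨b, hb, hfb⟩ := hf.exit
    exact ⟨b, hb, by rwa [show m - j - 1 + j = m - 1 by omega]⟩

theorem take (hf : IsEar Adj S m f) {t : ℕ} (ht : t < m) {s : V} (hs : s ∈ S)
    (hts : Adj (f t) s) : IsEar Adj S (t + 1) f where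
  pos := t.succ_pos
  notMem r hr := hf.notMem r (by omega)
  adj_succ r hr := hf.adj_succ r (by omega)
  enter := hf.enter
  exit := ⟨s, hs, by simpa using hts⟩

theorem skip (hf : IsEar Adj S m f) {i j : ℕ} (hij : i < j) (hj : j < m)
    (hfij : Adj (f i) (f j)) :
    IsEar Adj S (m - (j - i - 1)) (fun t => if t ≤ i then f t else f (t + (j - i - 1))) where
  pos := by omega
  notMem t ht := by
    split_ifs
    exacts [hf.notMem t (by omega), hf.notMem _ (by omega)]
  adj_succ t ht := by
    split_ifs with h₁ h₂ h₂
    · exact hf.adj_succ t (by omega)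
    · rwa [show t + 1 + (j - i - 1) = j by omega, show t = i by omega]
    · omega
    · simpa [Nat.add_right_comm] using hf.adj_succ (t + (j - i - 1)) (by omega)
  enter := by simpa using hf.enter
  exit := by
    obtain ⟨b, hb, hfb⟩ := hf.exit
    refine ⟨b, hb, ?_⟩
    rwa [if_neg (by omega), show m - (j - i - 1) - 1 + (j - i - 1) = m - 1 by omega]

theorem reflTransGen (hf : IsEar Adj S m f) {U : Set V} {t t' : ℕ} (htt' : t ≤ t')
    (ht' : t' < m) (hU : ∀ r, t ≤ r → r ≤ t' → f r ∈ U) :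
    ReflTransGen (inducedOn Adj U) (f t) (f t') := by
  induction t', htt' using Nat.le_induction with
  | base => exact .refl
  | succ r htr ih =>
    exact (ih (by omega) fun q hq hq' => hU q hq (by omega)).tail
      ⟨hU r htr (by omega), hU (r + 1) (by omega) le_rfl, hf.adj_succ r ht'⟩

theorem isStronglyConnectedOn_union (hf : IsEar Adj S m f) (hS : IsStronglyConnectedOn Adj S) :
    IsStronglyConnectedOn Adj (S ∪ f '' Iio m) := by
  obtain ⟨s, hs, hsf⟩ := hf.enter
  obtain ⟨b, hb, hfb⟩ := hf.exit
  have hSU : S ⊆ S ∪ f '' Iio m := subset_union_left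
  have hfU : ∀ t < m, f t ∈ S ∪ f '' Iio m := fun t ht => Or.inr (mem_image_of_mem f ht)
  have hS' := fun x hx y hy => reflTransGen_inducedOn_mono hSU (hS x hx y hy)
  refine isStronglyConnectedOn_of_reach s ?_
  rintro _ (hu | ⟨t, ht, rfl⟩)
  · exact ⟨hS' _ hu s hs, hS' s hs _ hu⟩
  have ht : t < m := ht
  constructor
  · exact ((hf.reflTransGen (by omega) (by omega) fun r _ hr => hfU r (by omega)).tail
      ⟨hfU _ (by omega), hSU hb, hfb⟩).trans (hS' b hb s hs)
  · exact ReflTransGen.head ⟨hSU hs, hfU 0 hf.pos, hsf⟩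
      (hf.reflTransGen t.zero_le ht fun r _ hr => hfU r (by omega))

theorem isStronglyConnectedOn_image_Icc (hf : IsEar Adj S m f) {t t' : ℕ} (htt' : t ≤ t')
    (ht' : t' < m) (hback : Adj (f t') (f t)) : IsStronglyConnectedOn Adj (f '' Icc t t') := by
  have hfU : ∀ r, t ≤ r → r ≤ t' → f r ∈ f '' Icc t t' :=
    fun r h h' => mem_image_of_mem f ⟨h, h'⟩
  refine isStronglyConnectedOn_of_reach (f t) ?_
  rintro _ ⟨r, ⟨hr, hr'⟩, rfl⟩
  exact ⟨(hf.reflTransGen hr' ht' fun q hq hq' => hfU q (by omega) hq').tail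
      ⟨hfU t' htt' le_rfl, hfU t le_rfl htt', hback⟩,
    hf.reflTransGen hr (by omega) fun q hq hq' => hfU q hq (by omega)⟩

theorem compl_eq_image [Finite V] (hf : IsEar Adj S m f) (hS : IsStronglyConnectedOn Adj S)
    (hSmax : ∀ T ≠ univ, IsStronglyConnectedOn Adj T → T.ncard ≤ S.ncard) :
    Sᶜ = f '' Iio m := by
  have hunion : S ∪ f '' Iio m = univ := by
    by_contra hne
    have hlt : S.ncard < (S ∪ f '' Iio m).ncard := ncard_lt_ncard <|
      (ssubset_iff_of_subset subset_union_left).2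
        ⟨f 0, Or.inr (mem_image_of_mem f hf.pos), hf.notMem 0 hf.pos⟩
    exact hlt.not_ge (hSmax _ hne (hf.isStronglyConnectedOn_union hS))
  ext u
  refine ⟨fun hu => (hunion.ge (mem_univ u)).resolve_left hu, ?_⟩
  rintro ⟨t, ht, rfl⟩
  exact hf.notMem t ht

end IsEar

def IsShortestEar (Adj : V → V → Prop) (S : Set V) (m : ℕ) (f : ℕ → V) : Prop :=
  IsEar Adj S m f ∧ ∀ m' g, IsEar Adj S m' g → m ≤ m'

theorem exists_isShortestEar (hconn : IsStronglyConnected Adj) (hS : S.Nonempty)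
    (hSV : S ≠ univ) : ∃ m f, IsShortestEar Adj S m f := by
  classical
  have h := exists_isEar hconn hS hSV
  obtain ⟨f, hf⟩ := Nat.find_spec h
  exact ⟨_, f, hf, fun m' g hg => Nat.find_min' h ⟨g, hg⟩⟩

namespace IsShortestEar

theorem eq_zero_of_adj (hf : IsShortestEar Adj S m f) {s : V} (hs : s ∈ S) {t : ℕ}
    (ht : t < m) (hsf : Adj s (f t)) : t = 0 := by
  have := hf.2 _ _ (hf.1.drop ht hs hsf)
  omega

theorem eq_sub_one_of_adj (hf : IsShortestEar Adj S m f) {s : V} (hs : s ∈ S) {t : ℕ}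
    (ht : t < m) (hfs : Adj (f t) s) : t = m - 1 := by
  have := hf.2 _ _ (hf.1.take ht hs hfs)
  omega

theorem le_succ_of_adj (hf : IsShortestEar Adj S m f) {t t' : ℕ} (ht' : t' < m)
    (hff : Adj (f t) (f t')) : t' ≤ t + 1 := by
  by_contra h
  have := hf.2 _ _ (hf.1.skip (by omega) ht' hff)
  omega

theorem injOn (hf : IsShortestEar Adj S m f) : InjOn f (Iio m) := by
  have hne : ∀ t t', t < t' → t' < m → f t ≠ f t' := by
    rintro (_ | t) t' htt' ht' heq
    · obtain ⟨s, hs, hsf⟩ := hf.1.enter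
      have := hf.eq_zero_of_adj hs ht' (heq ▸ hsf)
      omega
    · have := hf.le_succ_of_adj ht' (heq ▸ hf.1.adj_succ t (by omega))
      omega
  intro t ht t' ht' heq
  by_contra h
  rcases Nat.lt_or_gt_of_ne h with h | h
  exacts [hne t t' h ht' heq, hne t' t h ht heq.symm]

theorem ncard_add_eq_card [Finite V] (hf : IsShortestEar Adj S m f) (hSc : Sᶜ = f '' Iio m) :
    S.ncard + m = Nat.card V := by
  rw [← ncard_add_ncard_compl S, hSc, hf.injOn.ncard_image, ncard_Iio_nat]

theorem add_one_le_of_adj (hf : IsShortestEar Adj S m f) (hS : S.Nonempty)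
    (hSmax : ∀ T ≠ univ, IsStronglyConnectedOn Adj T → T.ncard ≤ S.ncard) {t t' : ℕ}
    (htt' : t ≤ t') (ht' : t' < m) (hback : Adj (f t') (f t)) : t' + 1 ≤ S.ncard + t := by
  obtain ⟨s, hs⟩ := hS
  have hne : f '' Icc t t' ≠ univ := fun h => by
    obtain ⟨r, hr, rfl⟩ := h.ge (mem_univ s)
    exact hf.1.notMem r (by grind) hs
  have hcard := hSmax _ hne (hf.1.isStronglyConnectedOn_image_Icc htt' ht' hback)
  rw [(hf.injOn.mono fun r hr => by grind).ncard_image, ncard_Icc_nat] at hcard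
  omega

theorem two_mul_degree_le [Finite V] (hf : IsShortestEar Adj S m f) (hS : S.Nonempty)
    (hSmax : ∀ T ≠ univ, IsStronglyConnectedOn Adj T → T.ncard ≤ S.ncard)
    (hSc : Sᶜ = f '' Iio m) (hm : 3 ≤ m) : 2 * degree Adj (f 1) ≤ S.ncard + m := by
  have hS1 : 0 < S.ncard := (ncard_pos).2 hS
  set J := Iio (min m (S.ncard + 2)) \ {1}
  have hJ : J.ncard = min m (S.ncard + 2) - 1 := by
    rw [ncard_sdiff_singleton_of_mem (by rw [mem_Iio]; omega), ncard_Iio_nat]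
  have hnbhd : ∀ y ≠ f 1, Adj (f 1) y ∨ Adj y (f 1) → y ∈ f '' J := by
    intro y hy hadj
    have hyS : y ∉ S := fun hyS => by
      rcases hadj with h | h
      · have := hf.eq_sub_one_of_adj hyS (by omega) h
        omega
      · have := hf.eq_zero_of_adj hyS (by omega) h
        omega
    obtain ⟨t, ht, rfl⟩ : y ∈ f '' Iio m := hSc ▸ hyS
    have ht : t < m := ht
    -- out-neighbours: no forward chords; in-neighbours: backward chords span at most `|S|`
    have htS : t ≤ S.ncard + 1 := by
      rcases hadj with h | h
      · have := hf.le_succ_of_adj ht h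
        omega
      · rcases le_or_gt t 1 with h1 | h1
        · omega
        · have := hf.add_one_le_of_adj hS hSmax h1.le ht h
          omega
    exact ⟨t, ⟨by rw [mem_Iio]; omega, fun h1 => hy (by rw [show t = 1 from h1])⟩, rfl⟩
  have hdeg : degree Adj (f 1) ≤ J.ncard := (degree_le_ncard hnbhd).trans ncard_image_le
  omega

theorem adj_iff_of_two (hf : IsShortestEar Adj S 2 f) (hirr : ∀ x, ¬ Adj x x)
    (hSc : Sᶜ = f '' Iio 2) :
    (∀ u, Adj (f 0) u ↔ u = f 1) ∧ (∀ u, Adj u (f 1) ↔ u = f 0) := by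
  have hcases : ∀ u, u ∈ S ∨ u = f 0 ∨ u = f 1 := fun u => by
    by_cases hu : u ∈ S
    · exact .inl hu
    obtain ⟨t, ht, rfl⟩ : u ∈ f '' Iio 2 := hSc ▸ hu
    obtain rfl | rfl : t = 0 ∨ t = 1 := by rw [mem_Iio] at ht; omega
    exacts [.inr (.inl rfl), .inr (.inr rfl)]
  refine ⟨fun u => ⟨fun h => ?_, ?_⟩, fun u => ⟨fun h => ?_, ?_⟩⟩
  · obtain hu | rfl | rfl := hcases u
    · have := hf.eq_sub_one_of_adj hu two_pos h
      omega
    · exact absurd h (hirr _)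
    · rfl
  · rintro rfl
    exact hf.1.adj_succ 0 one_lt_two
  · obtain hu | rfl | rfl := hcases u
    · have := hf.eq_zero_of_adj hu one_lt_two h
      omega
    · rfl
    · exact absurd h (hirr _)
  · rintro rfl
    exact hf.1.adj_succ 0 one_lt_two

end IsShortestEar

end Ear

section PendantArc

variable {V : Type*} {Adj : V → V → Prop}

def shortcut (Adj : V → V → Prop) (x₁ x₂ a b : V) : Prop :=
  a ≠ b ∧ (Adj a b ∨ Adj a x₁ ∧ Adj x₂ b)

theorem IsStronglyConnectedOn.to_shortcut {U : Set V} {x₁ x₂ : V} (hirr : ∀ x, ¬ Adj x x)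
    (hU : IsStronglyConnectedOn Adj U) : IsStronglyConnectedOn (shortcut Adj x₁ x₂) U :=
  hU.mono_adj fun a _ hab => ⟨by rintro rfl; exact hirr a hab, .inl hab⟩

theorem IsStronglyConnectedOn.of_shortcut {U : Set V} {x₁ x₂ : V} (h₁₂ : Adj x₁ x₂)
    (hU : IsStronglyConnectedOn (shortcut Adj x₁ x₂) U) {a b : V} (ha : a ∈ U)
    (hax : Adj a x₁) (hb : b ∈ U) (hxb : Adj x₂ b) :
    IsStronglyConnectedOn Adj (insert x₁ (insert x₂ U)) := by
  set W := insert x₁ (insert x₂ U)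
  have hUW : U ⊆ W := fun u hu => mem_insert_of_mem _ (mem_insert_of_mem _ hu)
  have h₁ : x₁ ∈ W := mem_insert _ _
  have h₂ : x₂ ∈ W := mem_insert_of_mem _ (mem_insert _ _)
  have hU' : ∀ u ∈ U, ∀ v ∈ U, ReflTransGen (inducedOn Adj W) u v := by
    refine fun u hu v hv => reflTransGen_closed ?_ _ _ (hU u hu v hv)
    rintro c d ⟨hc, hd, -, hcd | ⟨hcx, hxd⟩⟩
    · exact .single ⟨hUW hc, hUW hd, hcd⟩
    · exact .head ⟨hUW hc, h₁, hcx⟩ <| .head ⟨h₁, h₂, h₁₂⟩ <| .single ⟨h₂, hUW hd, hxd⟩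
  have hx₂a : ReflTransGen (inducedOn Adj W) x₂ a :=
    .head ⟨h₂, hUW hb, hxb⟩ (hU' b hb a ha)
  have hax₁ : ReflTransGen (inducedOn Adj W) a x₁ := .single ⟨hUW ha, h₁, hax⟩
  refine isStronglyConnectedOn_of_reach a ?_
  rintro u (rfl | rfl | hu)
  · exact ⟨.head ⟨h₁, h₂, h₁₂⟩ hx₂a, hax₁⟩
  · exact ⟨hx₂a, hax₁.tail ⟨h₁, h₂, h₁₂⟩⟩
  · exact ⟨hU' u hu a ha, hU' a ha u hu⟩

theorem exists_sdiff_singleton_eq_pair [Finite V] {U : Set V} (hU : U.ncard = 3) {p q : V}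
    (hp : p ∈ U) (hq : q ∈ U) (hpq : p ≠ q) : ∃ s ∈ U, U \ {s} = {p, q} := by
  obtain ⟨s, hs, hspq⟩ : ∃ s ∈ U, s ∉ ({p, q} : Set V) := not_subset.1 fun hsub => by
    have := ncard_le_ncard hsub
    rw [ncard_pair hpq] at this
    omega
  refine ⟨s, hs, (eq_of_subset_of_ncard_le ?_ ?_).symm⟩
  · rintro u (rfl | rfl)
    exacts [⟨hp, fun h => hspq (h ▸ mem_insert _ _)⟩,
      ⟨hq, fun h => hspq (h ▸ mem_insert_of_mem _ rfl)⟩]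
  · rw [ncard_sdiff_singleton_of_mem hs, ncard_pair hpq]
    omega

theorem exists_isStronglyConnectedOn_shortcut_sdiff_of_ncard_eq_three [Finite V] {S : Set V}
    {x₁ x₂ : V}
    (hS : IsStronglyConnectedOn (shortcut Adj x₁ x₂) S) (hS3 : S.ncard = 3)
    (hA : 2 ≤ {a ∈ S | Adj a x₁}.ncard) (hB : 2 ≤ {b ∈ S | Adj x₂ b}.ncard) :
    ∃ s ∈ S, IsStronglyConnectedOn (shortcut Adj x₁ x₂) (S \ {s}) := by
  obtain ⟨p, hp, q, hq, hpq, hGpq, hGqp⟩ : ∃ p ∈ S, ∃ q ∈ S, p ≠ q ∧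
      shortcut Adj x₁ x₂ p q ∧ shortcut Adj x₁ x₂ q p := by
    by_cases hBA : {b ∈ S | Adj x₂ b} ⊆ {a ∈ S | Adj a x₁}
    · obtain ⟨p, q, hp, hq, hpq⟩ := (one_lt_ncard_iff).1 hB
      exact ⟨p, hp.1, q, hq.1, hpq, ⟨hpq, .inr ⟨(hBA hp).2, hq.2⟩⟩,
        ⟨hpq.symm, .inr ⟨(hBA hq).2, hp.2⟩⟩⟩
    · obtain ⟨b, hb, hbA⟩ := not_subset.1 hBA
      obtain ⟨y, hy, hyb⟩ := exists_ne_of_one_lt_ncard (by omega : 1 < S.ncard) b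
      obtain ⟨c, hc, hbc⟩ := hS.exists_adj hb.1 hy hyb.symm
      have hA' : {a ∈ S | Adj a x₁} = S \ {b} :=
        eq_of_subset_of_ncard_le (fun a ha => ⟨ha.1, fun hab => hbA (hab ▸ ha)⟩)
          (by rw [ncard_sdiff_singleton_of_mem hb.1]; omega)
      have hcx : Adj c x₁ := (hA'.ge ⟨hc, hbc.1.symm⟩).2
      exact ⟨b, hb.1, c, hc, hbc.1, hbc, ⟨hbc.1.symm, .inr ⟨hcx, hb.2⟩⟩⟩
  obtain ⟨s, hs, hsd⟩ := exists_sdiff_singleton_eq_pair hS3 hp hq hpq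
  exact ⟨s, hs, hsd ▸ isStronglyConnectedOn_pair hGpq hGqp⟩

structure IsPendantArc (Adj : V → V → Prop) (S : Set V) (x₁ x₂ : V) : Prop where
  compl_eq : Sᶜ = {x₁, x₂}
  adj_left_iff : ∀ u, Adj x₁ u ↔ u = x₂
  adj_right_iff : ∀ u, Adj u x₂ ↔ u = x₁

namespace IsPendantArc

variable {S : Set V} {x₁ x₂ : V}

theorem left_notMem (h : IsPendantArc Adj S x₁ x₂) : x₁ ∉ S :=
  h.compl_eq.ge (mem_insert _ _)

theorem right_notMem (h : IsPendantArc Adj S x₁ x₂) : x₂ ∉ S :=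
  h.compl_eq.ge (mem_insert_of_mem _ rfl)

theorem mem_or (h : IsPendantArc Adj S x₁ x₂) (u : V) : u ∈ S ∨ u = x₁ ∨ u = x₂ := by
  by_cases hu : u ∈ S
  exacts [.inl hu, .inr (h.compl_eq.le hu)]

theorem ncard_add_two_eq_card [Finite V] (h : IsPendantArc Adj S x₁ x₂)
    (hirr : ∀ x, ¬ Adj x x) : S.ncard + 2 = Nat.card V := by
  have hne : x₁ ≠ x₂ := by
    rintro rfl
    exact hirr x₁ ((h.adj_left_iff x₁).2 rfl)
  rw [← ncard_add_ncard_compl S, h.compl_eq, ncard_pair hne]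

theorem le_two_mul_ncard_left [Finite V] (h : IsPendantArc Adj S x₁ x₂)
    (hdeg : ∀ x, Nat.card V + 1 ≤ 2 * degree Adj x) :
    Nat.card V ≤ 2 * {a ∈ S | Adj a x₁}.ncard + 1 := by
  have hle : degree Adj x₁ ≤ (insert x₂ {a ∈ S | Adj a x₁}).ncard := by
    refine degree_le_ncard fun y hy hadj => ?_
    rcases hadj with hadj | hadj
    · exact (h.adj_left_iff y).1 hadj ▸ mem_insert _ _
    · rcases h.mem_or y with hyS | rfl | rfl
      exacts [mem_insert_of_mem _ ⟨hyS, hadj⟩, absurd rfl hy, mem_insert _ _]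
  have := ncard_insert_le x₂ {a ∈ S | Adj a x₁}
  have := hdeg x₁
  omega

theorem le_two_mul_ncard_right [Finite V] (h : IsPendantArc Adj S x₁ x₂)
    (hdeg : ∀ x, Nat.card V + 1 ≤ 2 * degree Adj x) :
    Nat.card V ≤ 2 * {b ∈ S | Adj x₂ b}.ncard + 1 := by
  have hle : degree Adj x₂ ≤ (insert x₁ {b ∈ S | Adj x₂ b}).ncard := by
    refine degree_le_ncard fun y hy hadj => ?_
    rcases hadj with hadj | hadj
    · rcases h.mem_or y with hyS | rfl | rfl
      exacts [mem_insert_of_mem _ ⟨hyS, hadj⟩, mem_insert _ _, absurd rfl hy]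
    · exact (h.adj_right_iff y).1 hadj ▸ mem_insert _ _
  have := ncard_insert_le x₁ {b ∈ S | Adj x₂ b}
  have := hdeg x₂
  omega

theorem noncritical (h : IsPendantArc Adj S x₁ x₂) {s : V} (hs : s ∈ S)
    (hG : IsStronglyConnectedOn (shortcut Adj x₁ x₂) (S \ {s})) {a b : V} (ha : a ∈ S \ {s})
    (hax : Adj a x₁) (hb : b ∈ S \ {s}) (hxb : Adj x₂ b) : Noncritical Adj s := by
  have hcompl : ({s}ᶜ : Set V) = insert x₁ (insert x₂ (S \ {s})) := by
    ext u
    have h₁ : x₁ ≠ s := fun e => h.left_notMem (e ▸ hs)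
    have h₂ : x₂ ≠ s := fun e => h.right_notMem (e ▸ hs)
    rcases h.mem_or u with hu | rfl | rfl
    · simp [ne_of_mem_of_not_mem hu h.left_notMem, ne_of_mem_of_not_mem hu h.right_notMem, hu]
    all_goals simp [*]
  rw [noncritical_iff, hcompl]
  exact hG.of_shortcut ((h.adj_left_iff x₂).2 rfl) ha hax hb hxb

theorem adj_of_deficient [Finite V] (h : IsPendantArc Adj S x₁ x₂) (hirr : ∀ x, ¬ Adj x x)
    (hdeg : ∀ x, Nat.card V + 1 ≤ 2 * degree Adj x) {s : V} (hs : s ∈ S)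
    (hdef : 2 * (neighborSetIn (shortcut Adj x₁ x₂) S s).ncard ≤ S.ncard) :
    Adj s x₁ ∧ Adj x₂ s := by
  set N := neighborSetIn (shortcut Adj x₁ x₂) S s
  have hn := h.ncard_add_two_eq_card hirr
  have hN : ∀ y ≠ s, Adj s y ∨ Adj y s → y ∈ N ∨ y = x₁ ∧ Adj s x₁ ∨ y = x₂ ∧ Adj x₂ s := by
    intro y hy hadj
    rcases h.mem_or y with hyS | rfl | rfl
    · exact .inl ⟨hyS, hy, hadj.imp (fun h => ⟨hy.symm, .inl h⟩) fun h => ⟨hy, .inl h⟩⟩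
    · refine .inr (.inl ⟨rfl, hadj.resolve_right fun hxs => ?_⟩)
      exact h.right_notMem ((h.adj_left_iff s).1 hxs ▸ hs)
    · refine .inr (.inr ⟨rfl, hadj.resolve_left fun hsx => ?_⟩)
      exact h.left_notMem ((h.adj_right_iff s).1 hsx ▸ hs)
  constructor
  · by_contra hsx
    have : degree Adj s ≤ (insert x₂ N).ncard := degree_le_ncard fun y hy hadj => by
      rcases hN y hy hadj with hyN | ⟨-, hsx'⟩ | ⟨rfl, -⟩
      exacts [mem_insert_of_mem _ hyN, absurd hsx' hsx, mem_insert _ _]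
    have := ncard_insert_le x₂ N
    have := hdeg s
    omega
  · by_contra hxs
    have : degree Adj s ≤ (insert x₁ N).ncard := degree_le_ncard fun y hy hadj => by
      rcases hN y hy hadj with hyN | ⟨rfl, -⟩ | ⟨-, hxs'⟩
      exacts [mem_insert_of_mem _ hyN, mem_insert _ _, absurd hxs' hxs]
    have := ncard_insert_le x₁ N
    have := hdeg s
    omega

theorem isStronglyConnectedOn_sdiff_of_deficient [Finite V] (h : IsPendantArc Adj S x₁ x₂)
    (hirr : ∀ x, ¬ Adj x x) (hdeg : ∀ x, Nat.card V + 1 ≤ 2 * degree Adj x)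
    (hS : IsStronglyConnectedOn Adj S) {s : V} (hs : s ∈ S)
    (hdef : 2 * (neighborSetIn (shortcut Adj x₁ x₂) S s).ncard ≤ S.ncard) :
    IsStronglyConnectedOn (shortcut Adj x₁ x₂) (S \ {s}) := by
  set N := neighborSetIn (shortcut Adj x₁ x₂) S s
  obtain ⟨hsx, hxs⟩ := h.adj_of_deficient hirr hdeg hs hdef
  have hn := h.ncard_add_two_eq_card hirr
  have hA := h.le_two_mul_ncard_left hdeg
  have hB := h.le_two_mul_ncard_right hdeg
  -- `N` contains the other in-neighbours of `x₁` and out-neighbours of `x₂` in `S` and is too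
  -- small to contain anything else, so every transit through `s` is a shortcut arc
  have hNA : N ⊆ {a ∈ S | Adj a x₁} := by
    have hsub : {a ∈ S | Adj a x₁} \ {s} ⊆ N :=
      fun a ⟨⟨haS, hax⟩, has⟩ => ⟨haS, has, .inr ⟨has, .inr ⟨hax, hxs⟩⟩⟩
    have hs' : s ∈ {a ∈ S | Adj a x₁} := ⟨hs, hsx⟩
    rw [← eq_of_subset_of_ncard_le hsub (by rw [ncard_sdiff_singleton_of_mem hs']; omega)]
    exact sdiff_subset
  have hNB : N ⊆ {b ∈ S | Adj x₂ b} := by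
    have hsub : {b ∈ S | Adj x₂ b} \ {s} ⊆ N :=
      fun b ⟨⟨hbS, hxb⟩, hbs⟩ => ⟨hbS, hbs, .inl ⟨Ne.symm hbs, .inr ⟨hsx, hxb⟩⟩⟩
    have hs' : s ∈ {b ∈ S | Adj x₂ b} := ⟨hs, hxs⟩
    rw [← eq_of_subset_of_ncard_le hsub (by rw [ncard_sdiff_singleton_of_mem hs']; omega)]
    exact sdiff_subset
  refine (hS.to_shortcut hirr).sdiff_singleton ?_
  rintro w ⟨hwS, hws⟩ w' ⟨hw'S, hw's⟩ hw hw'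
  by_cases hww' : w = w'
  · exact hww' ▸ .refl
  · exact .single ⟨⟨hwS, hws⟩, ⟨hw'S, hw's⟩, hww',
      .inr ⟨(hNA ⟨hwS, hws, .inr hw⟩).2, (hNB ⟨hw'S, hw's, .inl hw'⟩).2⟩⟩

end IsPendantArc

end PendantArc

def NoncriticalOfMinDegree (W : Type*) : Prop :=
  ∀ R : W → W → Prop, (∀ x, ¬ R x x) → 4 ≤ Nat.card W → IsStronglyConnected R →
    (∀ x, Nat.card W + 1 ≤ 2 * degree R x) → ∃ v, Noncritical R v

theorem NoncriticalOfMinDegree.exists_isStronglyConnectedOn_sdiff {V : Type*}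
    {R : V → V → Prop} {U : Set V} (ih : NoncriticalOfMinDegree U) (hirr : ∀ x, ¬ R x x)
    (hU4 : 4 ≤ U.ncard) (hU : IsStronglyConnectedOn R U)
    (hdeg : ∀ u ∈ U, U.ncard + 1 ≤ 2 * (neighborSetIn R U u).ncard) :
    ∃ s ∈ U, IsStronglyConnectedOn R (U \ {s}) := by
  obtain ⟨v, hv⟩ := ih (fun a b : U => R a b) (fun a => hirr a)
    (by rwa [Nat.card_coe_set_eq]) (isStronglyConnected_subtype_iff.2 hU)
    fun u => by rw [Nat.card_coe_set_eq, degree_subtype]; exact hdeg u u.2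
  have := (noncritical_iff.1 hv).image Subtype.val fun _ _ h => h
  rw [image_val_compl, image_singleton] at this
  exact ⟨v, v.2, this⟩

theorem IsPendantArc.exists_noncritical {V : Type*} [Finite V] {Adj : V → V → Prop}
    {S : Set V} {x₁ x₂ : V} (h : IsPendantArc Adj S x₁ x₂) (hirr : ∀ x, ¬ Adj x x)
    (hcard : 4 ≤ Nat.card V) (hdeg : ∀ x, Nat.card V + 1 ≤ 2 * degree Adj x)
    (hS : IsStronglyConnectedOn Adj S) (ih : NoncriticalOfMinDegree S) :
    ∃ v, Noncritical Adj v := by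
  have hn := h.ncard_add_two_eq_card hirr
  have hA := h.le_two_mul_ncard_left hdeg
  have hB := h.le_two_mul_ncard_right hdeg
  have hG : IsStronglyConnectedOn (shortcut Adj x₁ x₂) S := hS.to_shortcut hirr
  obtain ⟨s, hs, hGs⟩ : ∃ s ∈ S, IsStronglyConnectedOn (shortcut Adj x₁ x₂) (S \ {s}) := by
    obtain hS2 | hS3 | hS4 : S.ncard = 2 ∨ S.ncard = 3 ∨ 4 ≤ S.ncard := by omega
    · obtain ⟨s, hs⟩ := nonempty_of_ncard_ne_zero (by omega : S.ncard ≠ 0)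
      refine ⟨s, hs, Set.Subsingleton.isStronglyConnectedOn ?_⟩
      rw [← ncard_le_one_iff_subsingleton, ncard_sdiff_singleton_of_mem hs]
      omega
    · exact exists_isStronglyConnectedOn_shortcut_sdiff_of_ncard_eq_three
        hG hS3 (by omega) (by omega)
    by_cases hdef : ∃ s ∈ S, 2 * (neighborSetIn (shortcut Adj x₁ x₂) S s).ncard ≤ S.ncard
    · obtain ⟨s, hs, hdef⟩ := hdef
      exact ⟨s, hs, h.isStronglyConnectedOn_sdiff_of_deficient hirr hdeg hS hs hdef⟩
    · push Not at hdef
      exact ih.exists_isStronglyConnectedOn_sdiff (fun x hx => hx.1 rfl) hS4 hG hdef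
  obtain ⟨a, ha, has⟩ := exists_ne_of_one_lt_ncard (by omega : 1 < {a ∈ S | Adj a x₁}.ncard) s
  obtain ⟨b, hb, hbs⟩ := exists_ne_of_one_lt_ncard (by omega : 1 < {b ∈ S | Adj x₂ b}.ncard) s
  exact ⟨s, h.noncritical hs hGs ⟨ha.1, has⟩ ha.2 ⟨hb.1, hbs⟩ hb.2⟩

theorem exists_max_isStronglyConnectedOn {V : Type*} [Finite V] (R : V → V → Prop)
    (hV : 2 ≤ Nat.card V) :
    ∃ S : Set V, S.Nonempty ∧ S ≠ univ ∧ IsStronglyConnectedOn R S ∧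
      ∀ T ≠ univ, IsStronglyConnectedOn R T → T.ncard ≤ S.ncard := by
  obtain ⟨v⟩ : Nonempty V := (Nat.card_pos_iff.1 (by omega)).1
  have hv : {v} ≠ univ := fun h => by
    have := congrArg ncard h
    rw [ncard_singleton, ncard_univ] at this
    omega
  have hvS : IsStronglyConnectedOn R {v} := subsingleton_singleton.isStronglyConnectedOn
  obtain ⟨S, ⟨hSV, hS⟩, hmax⟩ :=
    exists_max_image {T : Set V | T ≠ univ ∧ IsStronglyConnectedOn R T} ncard (toFinite _)
      ⟨{v}, hv, hvS⟩
  have h1 := hmax {v} ⟨hv, hvS⟩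
  rw [ncard_singleton] at h1
  exact ⟨S, nonempty_of_ncard_ne_zero (by omega), hSV, hS, fun T hT hTS => hmax T ⟨hT, hTS⟩⟩

theorem noncriticalOfMinDegree_of_finite (V : Type*) [Finite V] : NoncriticalOfMinDegree V := by
  induction hn : Nat.card V using Nat.strong_induction_on generalizing V with
  | _ n ih =>
  intro Adj hirr hcard hconn hdeg
  obtain ⟨S, hSne, hSV, hS, hSmax⟩ := exists_max_isStronglyConnectedOn Adj (by omega)
  obtain ⟨m, f, hf⟩ := exists_isShortestEar hconn hSne hSV
  have hSc := hf.1.compl_eq_image hS hSmax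
  have hSm := hf.ncard_add_eq_card hSc
  obtain rfl | rfl | hm : m = 1 ∨ m = 2 ∨ 3 ≤ m := by have := hf.1.pos; omega
  · refine ⟨f 0, noncritical_iff.2 ?_⟩
    have h1 : Iio 1 = {0} := by ext t; simp only [mem_Iio, mem_singleton_iff]; omega
    rwa [← compl_compl S, hSc, h1, image_singleton] at hS
  · obtain ⟨hout, hin⟩ := hf.adj_iff_of_two hirr hSc
    have hpair : Sᶜ = {f 0, f 1} := by
      have h2 : Iio 2 = {0, 1} := by
        ext t; simp only [mem_Iio, mem_insert_iff, mem_singleton_iff]; omega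
      rw [hSc, h2, image_pair]
    exact IsPendantArc.exists_noncritical ⟨hpair, hout, hin⟩ hirr hcard hdeg hS
      (ih _ (by omega) S (Nat.card_coe_set_eq S))
  · have := hf.two_mul_degree_le hSne hSmax hSc hm
    have := hdeg (f 1)
    omega

/-- If `D` is a strongly connected digraph on `n ≥ 4` vertices in which every
vertex `x` satisfies `2 * deg x ≥ n + 1`, then `D` has a noncritical vertex. -/
theorem exists_noncritical_of_min_degree
    {V : Type*} [Fintype V] (Adj : V → V → Prop)
    (hirr : ∀ x : V, ¬ Adj x x)
    (hcard : 4 ≤ Fintype.card V)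
    (hconn : IsStronglyConnected Adj)
    (hdeg : ∀ x : V, Fintype.card V + 1 ≤ 2 * degree Adj x) :
    ∃ v : V, Noncritical Adj v := by
  rw [← Nat.card_eq_fintype_card] at hcard hdeg
  exact noncriticalOfMinDegree_of_finite V Adj hirr hcard hconn hdeg
end

section
/- Let D be a strongly connected digraph on a finite vertex set V, and let U be a nonempty proper subset of V whose induced subdigraph is strongly connected. Then U is maximal (with respect to inclusion) among proper subsets of V inducing a strongly connected subdigraph if and only if the following three conditions hold: (1) there exists a vertex ω_in ∉ U such that every arc of D from a vertex of U to a vertex outside U ends at ω_in; (2) there exists a vertex ω_out ∉ U such that every arc of D from a vertex outside U to a vertex of U begins at ω_out; (3) there exists exactly one simple directed path in D from ω_in to ω_out, and the set of vertices of this path is exactly V \ U. -/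
/-- `l` is a simple directed path from `a` to `b` in the digraph `Adj`:
a nonempty list of pairwise distinct vertices, consecutive ones joined by arcs,
starting at `a` and ending at `b`. -/
def IsSimpleDirPath {V : Type*} (Adj : V → V → Prop) (a b : V) (l : List V) : Prop :=
  l.Nodup ∧ l.Chain' Adj ∧ l.head? = some a ∧ l.getLast? = some b

/-!
An ear of `U` (a walk outside `U` that leaves `U` by an arc and returns to it by an arc) induces,
together with `U`, a strongly connected subdigraph; so if `U` is maximal, every ear passes through
all of `V \ U`. Applied to the sub-ears of one simple ear from `ωin` to `ωout`, this forces every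
arc leaving `U` to end at `ωin`, every arc entering `U` to start at `ωout`, and no arc of the ear
to jump forward over one of its vertices. A simple path from `ωin` to `ωout` then never enters
`U`, and can only follow the ear step by step. Conversely, a strongly connected `W ⊋ U` contains
`ωin` and `ωout` (walks inside `W` cross the boundary of `U`), hence the unique path between
them, hence all of `V`.
-/

section Walks

open Relation List

variable {V : Type*} {r : V → V → Prop}

theorem Relation.ReflTransGen.exists_rel_of_mem_of_notMem {S : Set V} {a c : V}
    (h : ReflTransGen r a c) (ha : a ∈ S) (hc : c ∉ S) : ∃ x ∈ S, ∃ y ∉ S, r x y := by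
  induction h with
  | refl => exact absurd ha hc
  | @tail b c _ hbc ih =>
    by_cases hb : b ∈ S
    exacts [⟨b, hb, c, hc, hbc⟩, ih hb]

theorem exists_isSimpleDirPath {a b : V} (h : ReflTransGen r a b) :
    ∃ l, IsSimpleDirPath r a b l := by
  induction h using ReflTransGen.head_induction_on with
  | refl => exact ⟨[b], nodup_singleton b, isChain_singleton b, rfl, rfl⟩
  | @head a c hac _ ih =>
    obtain ⟨l, hnd, hch, hhd, hlast⟩ := ih
    by_cases hal : a ∈ l
    · obtain ⟨s, t, rfl⟩ := append_of_mem hal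
      exact ⟨a :: t, hnd.sublist (sublist_append_right _ _), hch.right_of_append, rfl,
        by simpa using hlast⟩
    · obtain ⟨t, rfl⟩ := head?_eq_some_iff.mp hhd
      exact ⟨a :: c :: t, nodup_cons.mpr ⟨hal, hnd⟩, hch.cons_cons hac, rfl,
        by simpa using hlast⟩

def inducedRel (r : V → V → Prop) (S : Set V) (a b : V) : Prop :=
  a ∈ S ∧ b ∈ S ∧ r a b

theorem reflTransGen_subtype_iff {S : Set V} {x y : S} :
    ReflTransGen (fun a b : S => r a b) x y ↔ ReflTransGen (inducedRel r S) x y := by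
  refine ⟨fun h => ReflTransGen.lift Subtype.val (fun a b h => ⟨a.2, b.2, h⟩) _ _ h,
    fun h => ?_⟩
  suffices ∀ c, ReflTransGen (inducedRel r S) x c →
      ∀ hc : c ∈ S, ReflTransGen (fun a b : S => r a b) x ⟨c, hc⟩ from this y h y.2
  intro c hc
  induction hc with
  | refl => exact fun _ => .refl
  | tail _ hbc ih => exact fun _ => (ih hbc.1).tail hbc.2.2

theorem isStronglyConnected_subtype_iff_s4 {S : Set V} :
    IsStronglyConnected (fun a b : S => r a b) ↔
      ∀ x ∈ S, ∀ y ∈ S, ReflTransGen (inducedRel r S) x y :=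
  ⟨fun h x hx y hy => reflTransGen_subtype_iff.mp (h ⟨x, hx⟩ ⟨y, hy⟩),
    fun h x y => reflTransGen_subtype_iff.mpr (h x x.2 y y.2)⟩

theorem exists_isSimpleDirPath_of_inducedRel {S : Set V} {a b : V}
    (h : ReflTransGen (inducedRel r S) a b) (ha : a ∈ S) :
    ∃ l, IsSimpleDirPath r a b l ∧ ∀ x ∈ l, x ∈ S := by
  obtain ⟨l, hnd, hch, hhd, hlast⟩ := exists_isSimpleDirPath h
  obtain ⟨t, rfl⟩ := head?_eq_some_iff.mp hhd
  exact ⟨a :: t, ⟨hnd, hch.imp fun _ _ h => h.2.2, hhd, hlast⟩,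
    IsChain.induction _ _ hch (fun _ _ h _ => h.2.1) fun _ => ha⟩

theorem IsSimpleDirPath.of_cons_cons {a b c : V} {t : List V}
    (h : IsSimpleDirPath r a b (a :: c :: t)) :
    a ∉ c :: t ∧ r a c ∧ IsSimpleDirPath r c b (c :: t) := by
  obtain ⟨hnd, hch, -, hlast⟩ := h
  obtain ⟨ha, hnd⟩ := nodup_cons.mp hnd
  obtain ⟨hac, hch⟩ := isChain_cons_cons.mp hch
  exact ⟨ha, hac, hnd, hch, rfl, by simpa using hlast⟩

theorem IsSimpleDirPath.end_mem {a b : V} {l : List V} (h : IsSimpleDirPath r a b l) :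
    b ∈ l :=
  mem_of_getLast? h.2.2.2

theorem IsSimpleDirPath.forall_notMem {S : Set V} {a b : V} {l : List V}
    (hl : IsSimpleDirPath r a b l) (ha : a ∉ S)
    (hentry : ∀ x ∉ S, ∀ y ∈ S, r x y → x = b) : ∀ x ∈ l, x ∉ S := by
  induction l generalizing a with
  | nil => simp [IsSimpleDirPath] at hl
  | cons x t ih =>
    obtain rfl : a = x := (Option.some.inj hl.2.2.1).symm
    rcases t with _ | ⟨c, t⟩
    · simpa using ha
    obtain ⟨ha_notMem, hac, hpath⟩ := hl.of_cons_cons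
    have hc : c ∉ S := fun hc => ha_notMem (hentry a ha c hc hac ▸ hpath.end_mem)
    exact forall_mem_cons.mpr ⟨ha, ih hpath hc⟩

def ForwardChordless (r : V → V → Prop) (l : List V) : Prop :=
  ∀ s a m c t, l = s ++ a :: (m ++ c :: t) → r a c → m = []

theorem IsSimpleDirPath.eq_of_forwardChordless {a b : V} {l l' : List V}
    (hl : IsSimpleDirPath r a b l) (hc : ForwardChordless r l)
    (hl' : IsSimpleDirPath r a b l') (hsub : ∀ x ∈ l', x ∈ l) : l' = l := by
  induction l generalizing a l' with
  | nil => simp [IsSimpleDirPath] at hl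
  | cons x t ih =>
    obtain rfl : a = x := (Option.some.inj hl.2.2.1).symm
    obtain ⟨t', rfl⟩ := head?_eq_some_iff.mp hl'.2.2.1
    rcases t' with _ | ⟨c, t'⟩
    · obtain rfl : a = b := by simpa using hl'.2.2.2
      rcases t with _ | ⟨d, t⟩
      · rfl
      · obtain ⟨ha_notMem, -, hpath⟩ := hl.of_cons_cons
        exact absurd hpath.end_mem ha_notMem
    obtain ⟨ha_notMem, hac, hpath'⟩ := hl'.of_cons_cons
    have hsub' : ∀ y ∈ c :: t', y ∈ t := fun y hy =>
      (mem_cons.mp (hsub y (mem_cons_of_mem a hy))).resolve_left fun h => ha_notMem (h ▸ hy)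
    -- the first step of `l'` cannot skip a vertex of `l`
    obtain ⟨m, t₀, rfl⟩ := append_of_mem (hsub' c mem_cons_self)
    obtain rfl : m = [] := hc [] a m c t₀ rfl hac
    have hct : ForwardChordless r (c :: t₀) := fun s a' m' c' t'' h =>
      hc (a :: s) a' m' c' t'' (by simp [h])
    rw [ih hl.of_cons_cons.2.2 hct hpath' hsub']

end Walks

section Ears

open Relation List

variable {V : Type*} {Adj : V → V → Prop} {U : Set V} {b e : V} {l : List V}

/-- The list holds only the inner vertices `b, …, e` of the ear; the arcs attaching it to `U`
are recorded by `adj_head` and `adj_getLast`. -/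
structure IsEar_s4 (Adj : V → V → Prop) (U : Set V) (b e : V) (l : List V) : Prop where
  isChain : l.IsChain Adj
  head?_eq : l.head? = some b
  getLast?_eq : l.getLast? = some e
  notMem : ∀ x ∈ l, x ∉ U
  adj_head : ∃ u ∈ U, Adj u b
  adj_getLast : ∃ u ∈ U, Adj e u

theorem IsEar_s4.head_mem (hl : IsEar_s4 Adj U b e l) : b ∈ l := mem_of_mem_head? hl.head?_eq

theorem IsEar_s4.getLast_mem (hl : IsEar_s4 Adj U b e l) : e ∈ l := mem_of_getLast? hl.getLast?_eq

def MaximalAmongProperStronglyConnected (Adj : V → V → Prop) (U : Set V) : Prop :=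
  ∀ W : Set V, U ⊆ W → W ≠ Set.univ →
    IsStronglyConnected (fun x y : W => Adj x y) → W = U

theorem IsEar_s4.isStronglyConnected_union (hU : IsStronglyConnected (fun x y : U => Adj x y))
    (hl : IsEar_s4 Adj U b e l) :
    IsStronglyConnected (fun x y : ↥(U ∪ {x | x ∈ l}) => Adj x y) := by
  set R := inducedRel Adj (U ∪ {x | x ∈ l})
  obtain ⟨u, hu, hub⟩ := hl.adj_head
  obtain ⟨u', hu', heu⟩ := hl.adj_getLast
  have hinU : ∀ x ∈ U, ∀ y ∈ U, ReflTransGen R x y := fun x hx y hy =>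
    ReflTransGen.mono (fun _ _ h => ⟨Or.inl h.1, Or.inl h.2.1, h.2.2⟩)
      _ _ (isStronglyConnected_subtype_iff_s4.mp hU x hx y hy)
  have hchain : l.IsChain R :=
    hl.isChain.imp_of_mem_imp fun _ _ hx hy h => ⟨Or.inr hx, Or.inr hy, h⟩
  have hfrom_b : ∀ x ∈ l, ReflTransGen R b x := hchain.induction _ _ (fun _ _ h h' => h'.tail h)
    fun hne => Option.some.inj ((head?_eq_some_head hne).symm.trans hl.head?_eq) ▸ .refl
  have hto_e : ∀ x ∈ l, ReflTransGen R x e := hchain.backwards_induction _ _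
    (fun _ _ h h' => h'.head h)
    fun hne => Option.some.inj ((getLast?_eq_some_getLast hne).symm.trans hl.getLast?_eq) ▸ .refl
  have hto_u : ∀ x ∈ U ∪ {x | x ∈ l}, ReflTransGen R x u := by
    rintro x (hx | hx)
    · exact hinU x hx u hu
    · exact ((hto_e x hx).tail ⟨Or.inr hl.getLast_mem, Or.inl hu', heu⟩).trans
        (hinU u' hu' u hu)
  have hfrom_u : ∀ y ∈ U ∪ {x | x ∈ l}, ReflTransGen R u y := by
    rintro y (hy | hy)
    · exact hinU u hu y hy
    · exact .head ⟨Or.inl hu, Or.inr hl.head_mem, hub⟩ (hfrom_b y hy)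
  exact isStronglyConnected_subtype_iff_s4.mpr fun x hx y hy => (hto_u x hx).trans (hfrom_u y hy)

theorem IsEar_s4.mem_of_notMem (hU : IsStronglyConnected (fun x y : U => Adj x y))
    (hmax : MaximalAmongProperStronglyConnected Adj U)
    (hl : IsEar_s4 Adj U b e l) {x : V} (hxU : x ∉ U) : x ∈ l := by
  by_contra hxl
  have hWU := hmax _ Set.subset_union_left
    ((Set.ne_univ_iff_exists_notMem _).mpr ⟨x, fun h => h.elim hxU hxl⟩)
    (hl.isStronglyConnected_union hU)
  exact hl.notMem b hl.head_mem (hWU ▸ Or.inr hl.head_mem)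

theorem exists_isEar_nodup (hconn : IsStronglyConnected Adj) (hne : U.Nonempty)
    (hproper : U ≠ Set.univ) : ∃ b e l, IsEar_s4 Adj U b e l ∧ l.Nodup := by
  obtain ⟨u₀, hu₀⟩ := hne
  obtain ⟨v₀, hv₀⟩ := (Set.ne_univ_iff_exists_notMem U).mp hproper
  obtain ⟨u, hu, b, hb, hub⟩ := (hconn u₀ v₀).exists_rel_of_mem_of_notMem hu₀ hv₀
  -- `e` is the last vertex before a walk from `b` to `u₀` first re-enters `U`
  obtain ⟨e, ⟨hbe, he⟩, u', hu', heu⟩ := (hconn b u₀).exists_rel_of_mem_of_notMem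
    (S := {x | ReflTransGen (inducedRel Adj Uᶜ) b x ∧ x ∉ U}) ⟨.refl, hb⟩
    fun h => h.2 hu₀
  have hu'U : u' ∈ U := by
    by_contra h
    exact hu' ⟨hbe.tail ⟨he, h, heu⟩, h⟩
  obtain ⟨l, hl, hlU⟩ := exists_isSimpleDirPath_of_inducedRel hbe hb
  exact ⟨b, e, l, ⟨hl.2.1, hl.2.2.1, hl.2.2.2, hlU, ⟨u, hu, hub⟩, u', hu'U, heu⟩, hl.1⟩

theorem IsEar_s4.eq_head_of_adj (hU : IsStronglyConnected (fun x y : U => Adj x y))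
    (hmax : MaximalAmongProperStronglyConnected Adj U) (hl : IsEar_s4 Adj U b e l) (hnd : l.Nodup)
    {x y : V} (hx : x ∈ U) (hy : y ∉ U) (hxy : Adj x y) : y = b := by
  obtain ⟨s, t, rfl⟩ := append_of_mem (hl.mem_of_notMem hU hmax hy)
  have hsuffix : IsEar_s4 Adj U y e (y :: t) :=
    ⟨hl.isChain.right_of_append, rfl, by simpa using hl.getLast?_eq,
      fun z hz => hl.notMem z (mem_append_right s hz), ⟨x, hx, hxy⟩, hl.adj_getLast⟩
  have hb := hsuffix.mem_of_notMem hU hmax (hl.notMem b hl.head_mem)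
  rcases s with _ | ⟨c, s⟩
  · simpa using hl.head?_eq
  · obtain rfl : c = b := by simpa using hl.head?_eq
    exact absurd (mem_append_right s hb) (nodup_cons.mp hnd).1

theorem IsEar_s4.eq_getLast_of_adj (hU : IsStronglyConnected (fun x y : U => Adj x y))
    (hmax : MaximalAmongProperStronglyConnected Adj U) (hl : IsEar_s4 Adj U b e l) (hnd : l.Nodup)
    {x y : V} (hx : x ∉ U) (hy : y ∈ U) (hxy : Adj x y) : x = e := by
  obtain ⟨s, t, rfl⟩ := append_of_mem (hl.mem_of_notMem hU hmax hx)
  have hprefix : IsEar_s4 Adj U b x (s ++ [x]) :=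
    ⟨hl.isChain.prefix ⟨t, by simp⟩, by simpa using hl.head?_eq, by simp,
      fun z hz => hl.notMem z (by simp at hz ⊢; tauto), hl.adj_head, ⟨y, hy, hxy⟩⟩
  have he := hprefix.mem_of_notMem hU hmax (hl.notMem e hl.getLast_mem)
  rcases t.eq_nil_or_concat with rfl | ⟨t, d, rfl⟩
  · simpa using hl.getLast?_eq
  · obtain rfl : d = e := by simpa [getLast?_cons] using hl.getLast?_eq
    grind [nodup_append]

theorem IsEar_s4.forwardChordless (hU : IsStronglyConnected (fun x y : U => Adj x y))
    (hmax : MaximalAmongProperStronglyConnected Adj U) (hl : IsEar_s4 Adj U b e l) (hnd : l.Nodup) :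
    ForwardChordless Adj l := by
  rintro s a m c t rfl hac
  have hshortcut : IsEar_s4 Adj U b e (s ++ a :: c :: t) :=
    ⟨isChain_append_cons_cons.mpr ⟨hl.isChain.prefix ⟨m ++ c :: t, by simp⟩, hac,
        hl.isChain.suffix ⟨s ++ a :: m, by simp⟩⟩,
      by simpa using hl.head?_eq, by simpa [getLast?_cons] using hl.getLast?_eq,
      fun z hz => hl.notMem z (by simp at hz ⊢; tauto), hl.adj_head, hl.adj_getLast⟩
  by_contra hm
  obtain ⟨x, hx⟩ := exists_mem_of_ne_nil m hm
  have := hshortcut.mem_of_notMem hU hmax (hl.notMem x (by simp [hx]))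
  grind [nodup_append]

end Ears

theorem maximalAmongProperStronglyConnected_of_unique_path {V : Type*} {Adj : V → V → Prop}
    {U : Set V} {ωin ωout : V} {l : List V} (hne : U.Nonempty)
    (hexit : ∀ x ∈ U, ∀ y ∉ U, Adj x y → y = ωin)
    (hentry : ∀ x ∉ U, ∀ y ∈ U, Adj x y → x = ωout)
    (hlU : ∀ x ∉ U, x ∈ l) (huniq : ∀ l', IsSimpleDirPath Adj ωin ωout l' → l' = l) :
    MaximalAmongProperStronglyConnected Adj U := by
  intro W hUW hWne hW
  by_contra hWU
  obtain ⟨w, hwW, hwU⟩ := Set.exists_of_ssubset (hUW.ssubset_of_ne (Ne.symm hWU))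
  obtain ⟨u, hu⟩ := hne
  have hW' := isStronglyConnected_subtype_iff_s4.mp hW
  -- walks inside `W` between `u` and `w` cross the boundary of `U` through `ωin` and `ωout`
  obtain ⟨x, hx, y, hy, hxy⟩ := (hW' u (hUW hu) w hwW).exists_rel_of_mem_of_notMem hu hwU
  obtain ⟨x', hx', y', hy', hxy'⟩ :=
    (hW' w hwW u (hUW hu)).exists_rel_of_mem_of_notMem (S := Uᶜ) hwU (not_not.mpr hu)
  have hin : ωin ∈ W := hexit x hx y hy hxy.2.2 ▸ hxy.2.1
  have hout : ωout ∈ W := hentry x' hx' y' (not_not.mp hy') hxy'.2.2 ▸ hxy'.1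
  obtain ⟨l', hl', hl'W⟩ := exists_isSimpleDirPath_of_inducedRel (hW' _ hin _ hout) hin
  refine hWne (Set.eq_univ_of_forall fun v => ?_)
  by_cases hv : v ∈ U
  · exact hUW hv
  · exact hl'W v (huniq l' hl' ▸ hlU v hv)

theorem maximal_strongly_connected_subgraph_iff_general
    {V : Type*} (Adj : V → V → Prop)
    (hconn : IsStronglyConnected Adj)
    (U : Set V) (hne : U.Nonempty) (hproper : U ≠ Set.univ)
    (hU : IsStronglyConnected (fun a b : U => Adj a b)) :
    (∀ W : Set V, U ⊆ W → W ≠ Set.univ →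
        IsStronglyConnected (fun a b : W => Adj a b) → W = U) ↔
      (∃ ωin : V, ωin ∉ U ∧ ∃ ωout : V, ωout ∉ U ∧
        (∀ x ∈ U, ∀ y ∉ U, Adj x y → y = ωin) ∧
        (∀ x ∉ U, ∀ y ∈ U, Adj x y → x = ωout) ∧
        (∃ l : List V, IsSimpleDirPath Adj ωin ωout l ∧ {x : V | x ∈ l} = Uᶜ) ∧
        (∀ l₁ l₂ : List V, IsSimpleDirPath Adj ωin ωout l₁ →
          IsSimpleDirPath Adj ωin ωout l₂ → l₁ = l₂)) := by
  constructor
  · intro hmax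
    obtain ⟨b, e, l, hl, hnd⟩ := exists_isEar_nodup hconn hne hproper
    have hb : b ∉ U := hl.notMem b hl.head_mem
    have hentry : ∀ x ∉ U, ∀ y ∈ U, Adj x y → x = e := fun _ hx _ hy =>
      hl.eq_getLast_of_adj hU hmax hnd hx hy
    have hpath : IsSimpleDirPath Adj b e l := ⟨hnd, hl.isChain, hl.head?_eq, hl.getLast?_eq⟩
    have huniq : ∀ l', IsSimpleDirPath Adj b e l' → l' = l := fun l' hl' =>
      hpath.eq_of_forwardChordless (hl.forwardChordless hU hmax hnd) hl' fun x hx =>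
        hl.mem_of_notMem hU hmax (hl'.forall_notMem hb hentry x hx)
    exact ⟨b, hb, e, hl.notMem e hl.getLast_mem,
      fun _ hx _ hy => hl.eq_head_of_adj hU hmax hnd hx hy, hentry,
      ⟨l, hpath, Set.ext fun x => ⟨hl.notMem x, hl.mem_of_notMem hU hmax⟩⟩,
      fun l₁ l₂ h₁ h₂ => (huniq l₁ h₁).trans (huniq l₂ h₂).symm⟩
  · rintro ⟨ωin, -, ωout, -, hexit, hentry, ⟨l, hl, hlU⟩, huniq⟩
    exact maximalAmongProperStronglyConnected_of_unique_path hne hexit hentry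
      (fun x hx => hlU.symm.subset hx) fun l' hl' => huniq l' l hl' hl

/-- Characterization of maximal proper strongly connected subdigraphs:
a nonempty proper subset `U` inducing a strongly connected subdigraph of a
strongly connected digraph `D` is maximal among proper subsets inducing strongly
connected subdigraphs iff (1) all arcs leaving `U` end at a common vertex `ω_in ∉ U`,
(2) all arcs entering `U` start at a common vertex `ω_out ∉ U`, and
(3) there is exactly one simple directed path in `D` from `ω_in` to `ω_out`,
and its vertex set is exactly the complement of `U`. -/
theorem maximal_strongly_connected_subgraph_iff
    {V : Type*} [Fintype V] (Adj : V → V → Prop)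
    (hirr : ∀ x : V, ¬ Adj x x)
    (hconn : IsStronglyConnected Adj)
    (U : Set V) (hne : U.Nonempty) (hproper : U ≠ Set.univ)
    (hU : IsStronglyConnected (fun a b : U => Adj a b)) :
    (∀ W : Set V, U ⊆ W → W ≠ Set.univ →
        IsStronglyConnected (fun a b : W => Adj a b) → W = U) ↔
      (∃ ωin : V, ωin ∉ U ∧ ∃ ωout : V, ωout ∉ U ∧
        (∀ x ∈ U, ∀ y ∉ U, Adj x y → y = ωin) ∧
        (∀ x ∉ U, ∀ y ∈ U, Adj x y → x = ωout) ∧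
        (∃ l : List V, IsSimpleDirPath Adj ωin ωout l ∧ {x : V | x ∈ l} = Uᶜ) ∧
        (∀ l₁ l₂ : List V, IsSimpleDirPath Adj ωin ωout l₁ →
          IsSimpleDirPath Adj ωin ωout l₂ → l₁ = l₂)) :=
  maximal_strongly_connected_subgraph_iff_general Adj hconn U hne hproper hU
end

section
/- For every even integer n ≥ 4 there exists a strongly connected digraph D on n vertices such that every vertex of D has degree exactly n/2 (so every pair of adjacent vertices has degree sum exactly n) and D has no noncritical vertex. -/
/-- For every even `n ≥ 4` there is a strongly connected digraph on `n` vertices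
all of whose vertices have degree exactly `n / 2` (i.e. `2 * deg x = n`),
with no noncritical vertex. -/
theorem exists_half_degree_digraph_without_noncritical (n : ℕ) (hn : 4 ≤ n) (hev : Even n) :
    ∃ Adj : Fin n → Fin n → Prop,
      (∀ x, ¬ Adj x x) ∧
      IsStronglyConnected Adj ∧
      (∀ x, 2 * degree Adj x = n) ∧
      (∀ v, ¬ Noncritical Adj v) := by
  obtain ⟨m, hm⟩ := hev
  have hm2 : 2 ≤ m := by omega
  have hmn : m < n := by omega
  -- vertices with val < m are "a" vertices, others are "b" vertices.
  -- arcs: every a to every b; b_i (val = i + m) to a_i (val = i).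
  set Adj : Fin n → Fin n → Prop :=
    fun x y => (x.val < m ∧ m ≤ y.val) ∨ (m ≤ x.val ∧ y.val + m = x.val) with hAdj
  refine ⟨Adj, ?_, ?_, ?_, ?_⟩
  · intro x hx
    rcases hx with ⟨h1, h2⟩ | ⟨h1, h2⟩ <;> omega
  · -- strong connectivity
    have step : ∀ x y : Fin n, Adj x y → Relation.ReflTransGen Adj x y := fun x y h =>
      Relation.ReflTransGen.single h
    have ab : ∀ x y : Fin n, x.val < m → m ≤ y.val → Relation.ReflTransGen Adj x y :=
      fun x y h1 h2 => step _ _ (Or.inl ⟨h1, h2⟩)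
    have aa : ∀ x y : Fin n, x.val < m → y.val < m → Relation.ReflTransGen Adj x y := by
      intro x y h1 h2
      have hb : (y.val + m) < n := by omega
      refine Relation.ReflTransGen.head (Or.inl ⟨h1, ?_⟩)
        (step (⟨y.val + m, hb⟩ : Fin n) y (Or.inr ⟨?_, ?_⟩)) <;> simp <;> omega
    intro x y
    by_cases hx : x.val < m
    · by_cases hy : y.val < m
      · exact aa x y hx hy
      · exact ab x y hx (by omega)
    · -- x is a b-vertex: go to its a-vertex first
      have hx' : m ≤ x.val := by omega
      have ha : x.val - m < n := by omega
      set a : Fin n := ⟨x.val - m, ha⟩ with hadef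
      have h1 : Relation.ReflTransGen Adj x a := step x a (Or.inr ⟨hx', by simp [hadef]; omega⟩)
      have ham : a.val < m := by simp [hadef]; omega
      refine h1.trans ?_
      by_cases hy : y.val < m
      · by_cases hay : a = y
        · rw [hay]
        · exact aa a y ham hy
      · exact ab a y ham (by omega)
  · -- degrees
    intro x
    unfold degree
    by_cases hx : x.val < m
    · have hset : {y : Fin n | y ≠ x ∧ (Adj x y ∨ Adj y x)} =
          ↑(Finset.Ici (⟨m, hmn⟩ : Fin n)) := by
        ext y
        simp only [Set.mem_setOf_eq, Finset.coe_Ici, Set.mem_Ici, Fin.le_def, hAdj,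
          ne_eq, Fin.ext_iff, Fin.val_mk]
        omega
      rw [hset, Set.ncard_coe_finset, Fin.card_Ici]
      show 2 * (n - m) = n
      omega
    · have hset : {y : Fin n | y ≠ x ∧ (Adj x y ∨ Adj y x)} =
          ↑(Finset.Iio (⟨m, hmn⟩ : Fin n)) := by
        ext y
        simp only [Set.mem_setOf_eq, Finset.coe_Iio, Set.mem_Iio, Fin.lt_def, hAdj,
          ne_eq, Fin.ext_iff, Fin.val_mk]
        omega
      rw [hset, Set.ncard_coe_finset, Fin.card_Iio]
      show 2 * m = n
      omega
  · -- no noncritical vertex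
    intro v hv
    by_cases hvm : v.val < m
    · -- b_v := v + m has no out-arc after deleting v
      have hb : v.val + m < n := by omega
      set b : Fin n := ⟨v.val + m, hb⟩ with hbdef
      have hbv : b ≠ v := by
        intro h; apply_fun Fin.val at h; simp [hbdef] at h; omega
      -- pick a target distinct from b and v
      have hx : (if v.val = 0 then 1 else 0) < n := by split <;> omega
      set x : Fin n := ⟨if v.val = 0 then 1 else 0, hx⟩ with hxdef
      have hxv : x ≠ v := by
        intro h; apply_fun Fin.val at h; simp [hxdef] at h; split at h <;> omega
      have hxb : x ≠ b := by
        intro h; apply_fun Fin.val at h; simp [hxdef, hbdef] at h; split at h <;> omega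
      have := hv ⟨b, hbv⟩ ⟨x, hxv⟩
      rcases this.cases_head with h | ⟨c, hc, _⟩
      · exact hxb (congrArg Subtype.val h.symm)
      · rcases hc with ⟨h1, h2⟩ | ⟨h1, h2⟩
        · have h1' : v.val + m < m := by simpa [hbdef] using h1
          omega
        · refine c.2 (Fin.ext ?_)
          have h2' : (c : Fin n).val + m = v.val + m := by simpa [hbdef] using h2
          omega
    · -- a_v := v - m has no in-arc after deleting v
      have ha : v.val - m < n := by omega
      set a : Fin n := ⟨v.val - m, ha⟩ with hadef
      have hav : a ≠ v := by
        intro h; apply_fun Fin.val at h; simp [hadef] at h; omega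
      have hx : (if v.val = m then m + 1 else m) < n := by split <;> omega
      set x : Fin n := ⟨if v.val = m then m + 1 else m, hx⟩ with hxdef
      have hxv : x ≠ v := by
        intro h; apply_fun Fin.val at h; simp [hxdef] at h; split at h <;> omega
      have hxa : x ≠ a := by
        intro h; apply_fun Fin.val at h; simp [hxdef, hadef] at h; split at h <;> omega
      have := hv ⟨x, hxv⟩ ⟨a, hav⟩
      rcases this.cases_tail with h | ⟨c, _, hc⟩
      · exact hxa (congrArg Subtype.val h.symm)
      · rcases hc with ⟨h1, h2⟩ | ⟨h1, h2⟩
        · have h2' : m ≤ v.val - m := by simpa [hadef] using h2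
          omega
        · refine c.2 (Fin.ext ?_)
          have h2' : v.val - m + m = (c : Fin n).val := by simpa [hadef] using h2
          omega
end

section
/- For every integer n ≥ 6 there exists a strongly connected digraph D on n vertices such that for every pair of adjacent vertices x and y one has deg(x) + deg(y) ≥ n, and D has no noncritical vertex. (Hence the bound n + 1 on adjacent degree sums guaranteeing a noncritical vertex cannot be lowered to n, for even or odd n.) -/
namespace DigraphTight

/-- The extremal digraph: a directed cycle `0 → 1 → ⋯ → n-1 → 0` together with
backward arcs `x → 0` for `1 ≤ x ≤ n-3`, arcs `n-1 → y` for `2 ≤ y ≤ n-2`,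
and backward chords `x → y` for `2 ≤ y < x ≤ n-3`. -/
def A (n : ℕ) (x y : Fin n) : Prop :=
  y.val = x.val + 1 ∨
  (x.val = n - 1 ∧ (y.val = 0 ∨ (2 ≤ y.val ∧ y.val ≤ n - 2))) ∨
  (y.val = 0 ∧ 1 ≤ x.val ∧ x.val ≤ n - 3) ∨
  (2 ≤ y.val ∧ y.val < x.val ∧ x.val ≤ n - 3)

lemma card_le_degree {n : ℕ} (x : Fin n) (s : Finset (Fin n))
    (h : ∀ y ∈ s, y ≠ x ∧ (A n x y ∨ A n y x)) : s.card ≤ degree (A n) x := by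
  rw [degree, ← Set.ncard_coe_finset]
  exact Set.ncard_le_ncard (fun y hy => h y (Finset.mem_coe.mp hy)) (Set.toFinite _)

lemma compl_card_le_degree {n : ℕ} (x : Fin n) (s : Finset (Fin n))
    (h : ∀ y : Fin n, y ∉ s → y ≠ x ∧ (A n x y ∨ A n y x)) :
    n - s.card ≤ degree (A n) x := by
  have := card_le_degree x sᶜ (fun y hy => h y (Finset.mem_compl.mp hy))
  simpa [Finset.card_compl, Fintype.card_fin] using this

lemma two_le_degree {n : ℕ} (x : Fin n) (u v : ℕ) (hu : u < n) (hv : v < n) (huv : u ≠ v)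
    (h : ∀ y : Fin n, y.val = u ∨ y.val = v → y ≠ x ∧ (A n x y ∨ A n y x)) :
    2 ≤ degree (A n) x := by
  have hcard : ({⟨u, hu⟩, ⟨v, hv⟩} : Finset (Fin n)).card = 2 :=
    Finset.card_pair (fun hh => huv (congrArg Fin.val hh))
  rw [← hcard]
  apply card_le_degree
  intro y hy
  apply h
  rcases Finset.mem_insert.mp hy with rfl | hy'
  · exact Or.inl rfl
  · rw [Finset.mem_singleton.mp hy']
    exact Or.inr rfl

lemma compl2_le_degree {n : ℕ} (x : Fin n) (u v : ℕ) (hu : u < n) (hv : v < n)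
    (h : ∀ y : Fin n, y.val ≠ u → y.val ≠ v → y ≠ x ∧ (A n x y ∨ A n y x)) :
    n - 2 ≤ degree (A n) x := by
  have hle := compl_card_le_degree x {⟨u, hu⟩, ⟨v, hv⟩} ?_
  · have hc : ({(⟨u, hu⟩ : Fin n), ⟨v, hv⟩} : Finset (Fin n)).card ≤ 2 :=
      (Finset.card_insert_le _ _).trans (by simp)
    omega
  · intro y hy
    simp only [Finset.mem_insert, Finset.mem_singleton] at hy
    push_neg at hy
    exact h y (fun hh => hy.1 (Fin.ext hh)) (fun hh => hy.2 (Fin.ext hh))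

lemma compl3_le_degree {n : ℕ} (x : Fin n) (u v w : ℕ) (hu : u < n) (hv : v < n) (hw : w < n)
    (h : ∀ y : Fin n, y.val ≠ u → y.val ≠ v → y.val ≠ w → y ≠ x ∧ (A n x y ∨ A n y x)) :
    n - 3 ≤ degree (A n) x := by
  have hle := compl_card_le_degree x {⟨u, hu⟩, ⟨v, hv⟩, ⟨w, hw⟩} ?_
  · have hc1 := Finset.card_insert_le (⟨u, hu⟩ : Fin n) ({⟨v, hv⟩, ⟨w, hw⟩} : Finset (Fin n))
    have hc2 := Finset.card_insert_le (⟨v, hv⟩ : Fin n) ({⟨w, hw⟩} : Finset (Fin n))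
    have hc3 : ({(⟨w, hw⟩ : Fin n)} : Finset (Fin n)).card = 1 := Finset.card_singleton _
    omega
  · intro y hy
    simp only [Finset.mem_insert, Finset.mem_singleton] at hy
    push_neg at hy
    exact h y (fun hh => hy.1 (Fin.ext hh)) (fun hh => hy.2.1 (Fin.ext hh))
      (fun hh => hy.2.2 (Fin.ext hh))

/-- Lower bound for the degree of vertex `v`. -/
def lb (n v : ℕ) : ℕ :=
  if v = 1 then 2
  else if v = n - 2 then 2
  else if v = 0 then n - 2
  else if v = 2 then n - 2
  else if v = n - 3 then n - 2
  else if v = n - 1 then n - 2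
  else n - 3

lemma lb_eval_1 {n : ℕ} (hn : 6 ≤ n) {v : ℕ} (h : v = 1 ∨ v = n - 2) : lb n v = 2 := by
  unfold lb; split_ifs <;> omega

lemma lb_eval_2 {n : ℕ} (hn : 6 ≤ n) {v : ℕ} (h : v = 0 ∨ v = 2 ∨ v = n - 3 ∨ v = n - 1) :
    lb n v = n - 2 := by
  unfold lb; split_ifs <;> omega

lemma lb_eval_3 {n : ℕ} {v : ℕ} (h1 : v ≠ 1) (h2 : v ≠ n - 2) (h3 : v ≠ 0) (h4 : v ≠ 2)
    (h5 : v ≠ n - 3) (h6 : v ≠ n - 1) : lb n v = n - 3 := by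
  unfold lb; split_ifs <;> omega

lemma lb_ge {n : ℕ} (hn : 6 ≤ n) {v : ℕ} (h1 : v ≠ 1) (h2 : v ≠ n - 2) : n - 3 ≤ lb n v := by
  unfold lb; split_ifs <;> omega

set_option maxHeartbeats 1000000 in
lemma lb_le_degree {n : ℕ} (hn : 6 ≤ n) (x : Fin n) : lb n x.val ≤ degree (A n) x := by
  have hx := x.isLt
  by_cases h1 : x.val = 1
  · rw [lb_eval_1 hn (Or.inl h1)]
    apply two_le_degree x 0 2 (by omega) (by omega) (by omega)
    intro y hy
    refine ⟨fun hh => by rw [hh] at hy; omega, ?_⟩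
    unfold A; omega
  · by_cases h2 : x.val = n - 2
    · rw [lb_eval_1 hn (Or.inr h2)]
      apply two_le_degree x (n - 3) (n - 1) (by omega) (by omega) (by omega)
      intro y hy
      refine ⟨fun hh => by rw [hh] at hy; omega, ?_⟩
      unfold A; omega
    · by_cases h0 : x.val = 0
      · rw [lb_eval_2 hn (Or.inl h0)]
        apply compl2_le_degree x x.val (n - 2) hx (by omega)
        intro y hy1 hy2
        have hylt := y.isLt
        refine ⟨fun hh => hy1 (congrArg Fin.val hh), ?_⟩
        unfold A; omega
      · by_cases h3 : x.val = 2
        · rw [lb_eval_2 hn (Or.inr (Or.inl h3))]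
          apply compl2_le_degree x x.val (n - 2) hx (by omega)
          intro y hy1 hy2
          have hylt := y.isLt
          refine ⟨fun hh => hy1 (congrArg Fin.val hh), ?_⟩
          unfold A; omega
        · by_cases h4 : x.val = n - 3
          · rw [lb_eval_2 hn (Or.inr (Or.inr (Or.inl h4)))]
            apply compl2_le_degree x 1 x.val (by omega) hx
            intro y hy1 hy2
            have hylt := y.isLt
            refine ⟨fun hh => hy2 (congrArg Fin.val hh), ?_⟩
            unfold A; omega
          · by_cases h5 : x.val = n - 1
            · rw [lb_eval_2 hn (Or.inr (Or.inr (Or.inr h5)))]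
              apply compl2_le_degree x 1 x.val (by omega) hx
              intro y hy1 hy2
              have hylt := y.isLt
              refine ⟨fun hh => hy2 (congrArg Fin.val hh), ?_⟩
              unfold A; omega
            · -- middle vertex : 3 ≤ x.val ≤ n - 4
              rw [lb_eval_3 h1 h2 h0 h3 h4 h5]
              have hmid : n - 3 ≤ degree (A n) x := by
                apply compl3_le_degree x 1 x.val (n - 2) (by omega) hx (by omega)
                intro y hy1 hy2 hy3
                have hylt := y.isLt
                refine ⟨fun hh => hy2 (congrArg Fin.val hh), ?_⟩
                unfold A; omega
              exact hmid

lemma sum_lb {n : ℕ} (hn : 6 ≤ n) (x y : Fin n) (h : A n x y ∨ A n y x) :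
    n ≤ lb n x.val + lb n y.val := by
  have hx := x.isLt
  have hy := y.isLt
  unfold A at h
  by_cases hx1 : x.val = 1
  · have hyv : y.val = 0 ∨ y.val = 2 := by omega
    rw [lb_eval_1 hn (Or.inl hx1), lb_eval_2 hn (by omega)]
    omega
  · by_cases hx2 : x.val = n - 2
    · have hyv : y.val = n - 3 ∨ y.val = n - 1 := by omega
      rw [lb_eval_1 hn (Or.inr hx2), lb_eval_2 hn (by omega)]
      omega
    · by_cases hy1 : y.val = 1
      · have hxv : x.val = 0 ∨ x.val = 2 := by omega
        rw [lb_eval_1 hn (Or.inl hy1), lb_eval_2 hn (by omega)]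
        omega
      · by_cases hy2 : y.val = n - 2
        · have hxv : x.val = n - 3 ∨ x.val = n - 1 := by omega
          rw [lb_eval_1 hn (Or.inr hy2), lb_eval_2 hn (by omega)]
          omega
        · have g1 := lb_ge hn hx1 hx2
          have g2 := lb_ge hn hy1 hy2
          omega

lemma strong_conn {n : ℕ} (hn : 6 ≤ n) : IsStronglyConnected (A n) := by
  have h6 : 0 < n := by omega
  have h0 : ∀ (m : ℕ) (i : Fin n), i.val = m → Relation.ReflTransGen (A n) ⟨0, h6⟩ i := by
    intro m
    induction m with
    | zero =>
      intro i hi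
      have : i = ⟨0, h6⟩ := Fin.ext hi
      rw [this]
    | succ m ih =>
      intro i hi
      have hm : m < n := by omega
      exact (ih ⟨m, hm⟩ rfl).tail (Or.inl hi)
  have hto0 : ∀ i : Fin n, Relation.ReflTransGen (A n) i ⟨0, h6⟩ := by
    intro i
    have hi := i.isLt
    by_cases hc0 : i.val = 0
    · have : i = ⟨0, h6⟩ := Fin.ext hc0
      rw [this]
    · by_cases hc1 : i.val ≤ n - 3
      · exact Relation.ReflTransGen.single
          (Or.inr (Or.inr (Or.inl ⟨rfl, by omega, by omega⟩)))
      · by_cases hc2 : i.val = n - 1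
        · exact Relation.ReflTransGen.single (Or.inr (Or.inl ⟨hc2, Or.inl rfl⟩))
        · -- i.val = n - 2 : go i → n-1 → 0
          have step1 : A n i ⟨n - 1, by omega⟩ :=
            Or.inl (show n - 1 = i.val + 1 by omega)
          have step2 : A n ⟨n - 1, by omega⟩ ⟨0, h6⟩ :=
            Or.inr (Or.inl ⟨rfl, Or.inl rfl⟩)
          exact (Relation.ReflTransGen.single step1).tail step2
  intro x y
  exact (hto0 x).trans (h0 y.val y rfl)

lemma rtg_closed {α : Type*} {R : α → α → Prop} {C : α → Prop}
    (hC : ∀ a b, C a → R a b → C b) {x y : α}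
    (h : Relation.ReflTransGen R x y) : C x → C y := by
  induction h with
  | refl => exact id
  | tail _ step ih => exact fun hx => hC _ _ (ih hx) step

lemma no_noncritical {n : ℕ} (hn : 6 ≤ n) : ∀ v, ¬ Noncritical (A n) v := by
  intro v hv
  unfold Noncritical IsStronglyConnected at hv
  have hvlt := v.isLt
  by_cases hv0 : v.val = 0
  · -- after deleting 0, vertex 1 is unreachable (from 2)
    have hclosed : ∀ a b : {u : Fin n // u ≠ v},
        a.1.val ≠ 1 → A n a.1 b.1 → b.1.val ≠ 1 := by
      intro a b ha hab hb1
      have hav : a.1.val ≠ v.val := fun hh => a.2 (Fin.ext hh)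
      unfold A at hab
      omega
    have := rtg_closed (C := fun u : {u : Fin n // u ≠ v} => u.1.val ≠ 1) hclosed
      (hv ⟨⟨2, by omega⟩, Fin.ne_of_val_ne (show (2 : ℕ) ≠ v.val by omega)⟩
          ⟨⟨1, by omega⟩, Fin.ne_of_val_ne (show (1 : ℕ) ≠ v.val by omega)⟩)
      (show (2 : ℕ) ≠ 1 by norm_num)
    exact this rfl
  · by_cases hvn : v.val = n - 1
    · -- after deleting n-1, vertex n-2 has no out-arcs
      have hclosed : ∀ a b : {u : Fin n // u ≠ v},
          a.1.val = n - 2 → A n a.1 b.1 → b.1.val = n - 2 := by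
        intro a b ha hab
        have hbv : b.1.val ≠ v.val := fun hh => b.2 (Fin.ext hh)
        have hb := b.1.isLt
        unfold A at hab
        omega
      have := rtg_closed (C := fun u : {u : Fin n // u ≠ v} => u.1.val = n - 2) hclosed
        (hv ⟨⟨n - 2, by omega⟩, Fin.ne_of_val_ne (show n - 2 ≠ v.val by omega)⟩
            ⟨⟨0, by omega⟩, Fin.ne_of_val_ne (show (0 : ℕ) ≠ v.val by omega)⟩)
        rfl
      have h02 : (0 : ℕ) = n - 2 := this
      omega
    · -- 1 ≤ v ≤ n - 2 : vertices ≥ v are unreachable from 0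
      have hclosed : ∀ a b : {u : Fin n // u ≠ v},
          a.1.val < v.val → A n a.1 b.1 → b.1.val < v.val := by
        intro a b ha hab
        have hbv : b.1.val ≠ v.val := fun hh => b.2 (Fin.ext hh)
        unfold A at hab
        omega
      have := rtg_closed (C := fun u : {u : Fin n // u ≠ v} => u.1.val < v.val) hclosed
        (hv ⟨⟨0, by omega⟩, Fin.ne_of_val_ne (show (0 : ℕ) ≠ v.val by omega)⟩
            ⟨⟨n - 1, by omega⟩, Fin.ne_of_val_ne (show n - 1 ≠ v.val by omega)⟩)
        (show (0 : ℕ) < v.val by omega)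
      have hlast : n - 1 < v.val := this
      omega

lemma irrefl {n : ℕ} (hn : 6 ≤ n) : ∀ x : Fin n, ¬ A n x x := by
  intro x h
  have hx := x.isLt
  unfold A at h
  omega

end DigraphTight

/-- For every `n ≥ 6` there is a strongly connected digraph on `n` vertices in
which every pair of adjacent vertices has degree sum at least `n`, with no
noncritical vertex: the bound `n + 1` on adjacent degree sums is tight. -/
theorem exists_degree_sum_n_digraph_without_noncritical (n : ℕ) (hn : 6 ≤ n) :
    ∃ Adj : Fin n → Fin n → Prop,
      (∀ x, ¬ Adj x x) ∧
      IsStronglyConnected Adj ∧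
      (∀ x y, (Adj x y ∨ Adj y x) → n ≤ degree Adj x + degree Adj y) ∧
      (∀ v, ¬ Noncritical Adj v) := by
  refine ⟨DigraphTight.A n, DigraphTight.irrefl hn, DigraphTight.strong_conn hn, ?_,
    DigraphTight.no_noncritical hn⟩
  intro x y h
  exact le_trans (DigraphTight.sum_lb hn x y h)
    (Nat.add_le_add (DigraphTight.lb_le_degree hn x) (DigraphTight.lb_le_degree hn y))
end

section
/- For every integer n ≥ 5 there exists a strongly connected digraph D on n vertices such that for every pair of adjacent vertices x and y one has deg(x) + deg(y) ≥ n + 1, and D has exactly one noncritical vertex. (Hence the bound n + 2 on adjacent degree sums guaranteeing two noncritical vertices cannot be lowered to n + 1, for even or odd n.) -/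
/-- The example digraph: ascending steps `x → x+1`, a hub `n-1 → y` for all `y`,
and all descending arcs `x → y` with `1 ≤ y < x`. -/
def ExAdj (n : ℕ) (x y : Fin n) : Prop :=
  x.val + 1 = y.val ∨ (x.val = n - 1 ∧ y.val < n - 1) ∨ (0 < y.val ∧ y.val < x.val)

lemma exAdj_irrefl (n : ℕ) (x : Fin n) : ¬ ExAdj n x x := by
  rintro (h | ⟨h1, h2⟩ | ⟨h1, h2⟩) <;> omega

lemma reach_top (n : ℕ) (hn : 5 ≤ n) :
    ∀ k (x : Fin n), n - 1 - x.val ≤ k →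
      Relation.ReflTransGen (ExAdj n) x ⟨n - 1, by omega⟩ := by
  intro k
  induction k with
  | zero =>
    intro x hx
    have : x.val = n - 1 := by have := x.isLt; omega
    have : x = ⟨n - 1, by omega⟩ := Fin.ext this
    rw [this]
  | succ k ih =>
    intro x hx
    by_cases h : x.val = n - 1
    · have : x = ⟨n - 1, by omega⟩ := Fin.ext h
      rw [this]
    · have hlt : x.val + 1 < n := by have := x.isLt; omega
      refine Relation.ReflTransGen.head (b := ⟨x.val + 1, hlt⟩) (Or.inl rfl) ?_
      exact ih ⟨x.val + 1, hlt⟩ (by simp; omega)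

lemma exAdj_strong (n : ℕ) (hn : 5 ≤ n) : IsStronglyConnected (ExAdj n) := by
  intro x y
  have htop : Relation.ReflTransGen (ExAdj n) x ⟨n - 1, by omega⟩ :=
    reach_top n hn _ x le_rfl
  by_cases hy : y = ⟨n - 1, by omega⟩
  · rw [hy]; exact htop
  · have hyv : y.val < n - 1 := by
      have := y.isLt
      have : y.val ≠ n - 1 := fun h => hy (Fin.ext h)
      omega
    exact htop.tail (Or.inr (Or.inl ⟨rfl, hyv⟩))

/-- Every vertex with positive value has degree at least `n - 2`. -/
lemma deg_ge_mid (n : ℕ) (hn : 5 ≤ n) (x : Fin n) (hx : 0 < x.val) :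
    n - 2 ≤ degree (ExAdj n) x := by
  have hsub : ({x, (⟨0, by omega⟩ : Fin n)} : Set (Fin n))ᶜ ⊆
      {y : Fin n | y ≠ x ∧ (ExAdj n x y ∨ ExAdj n y x)} := by
    intro y hy
    simp only [Set.mem_compl_iff, Set.mem_insert_iff, Set.mem_singleton_iff, not_or] at hy
    obtain ⟨hyx, hy0⟩ := hy
    have hy0' : 0 < y.val := by
      rcases Nat.eq_zero_or_pos y.val with h | h
      · exact absurd (Fin.ext h) hy0
      · exact h
    refine ⟨hyx, ?_⟩
    have hne : y.val ≠ x.val := fun h => hyx (Fin.ext h)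
    rcases lt_or_gt_of_ne hne with h | h
    · exact Or.inl (Or.inr (Or.inr ⟨hy0', h⟩))
    · exact Or.inr (Or.inr (Or.inr ⟨hx, h⟩))
  calc n - 2 = (({x, (⟨0, by omega⟩ : Fin n)} : Set (Fin n))ᶜ).ncard := by
        rw [Set.compl_eq_univ_diff, Set.ncard_diff (Set.subset_univ _),
          Set.ncard_univ, Set.ncard_pair, Nat.card_eq_fintype_card, Fintype.card_fin]
        intro h
        have : x.val = 0 := by rw [h]
        omega
    _ ≤ _ := Set.ncard_le_ncard hsub (Set.toFinite _)

/-- Vertices `1` and `n-1` have full degree `n - 1`. -/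
lemma deg_ge_full (n : ℕ) (hn : 5 ≤ n) (x : Fin n) (hx : x.val = 1 ∨ x.val = n - 1) :
    n - 1 ≤ degree (ExAdj n) x := by
  have hsub : ({x} : Set (Fin n))ᶜ ⊆
      {y : Fin n | y ≠ x ∧ (ExAdj n x y ∨ ExAdj n y x)} := by
    intro y hy
    simp only [Set.mem_compl_iff, Set.mem_singleton_iff] at hy
    refine ⟨hy, ?_⟩
    have hne : y.val ≠ x.val := fun h => hy (Fin.ext h)
    have hylt := y.isLt
    rcases hx with h1 | h1
    · -- x has value 1
      rcases Nat.lt_or_ge y.val 2 with h | h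
      · -- y.val = 0
        have hy0 : y.val = 0 := by omega
        exact Or.inr (Or.inl (by omega))
      · exact Or.inr (Or.inr (Or.inr ⟨by omega, by omega⟩))
    · -- x is the top
      exact Or.inl (Or.inr (Or.inl ⟨h1, by omega⟩))
  calc n - 1 = (({x} : Set (Fin n))ᶜ).ncard := by
        rw [Set.compl_eq_univ_diff, Set.ncard_diff (Set.subset_univ _),
          Set.ncard_univ, Set.ncard_singleton, Nat.card_eq_fintype_card, Fintype.card_fin]
    _ ≤ _ := Set.ncard_le_ncard hsub (Set.toFinite _)

/-- Vertex `0` has degree at least `2`. -/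
lemma deg_zero_ge (n : ℕ) (hn : 5 ≤ n) :
    2 ≤ degree (ExAdj n) (⟨0, by omega⟩ : Fin n) := by
  have hsub : ({(⟨1, by omega⟩ : Fin n), ⟨n - 1, by omega⟩} : Set (Fin n)) ⊆
      {y : Fin n | y ≠ (⟨0, by omega⟩ : Fin n) ∧
        (ExAdj n ⟨0, by omega⟩ y ∨ ExAdj n y ⟨0, by omega⟩)} := by
    rintro y (rfl | rfl)
    · exact ⟨Fin.ne_of_val_ne (show (1:ℕ) ≠ 0 by omega),
        Or.inl (Or.inl (by simp))⟩
    · exact ⟨Fin.ne_of_val_ne (show (n-1:ℕ) ≠ 0 by omega),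
        Or.inr (Or.inr (Or.inl ⟨rfl, show (0:ℕ) < n - 1 by omega⟩))⟩
  calc 2 = ({(⟨1, by omega⟩ : Fin n), ⟨n - 1, by omega⟩} : Set (Fin n)).ncard :=
        (Set.ncard_pair (Fin.ne_of_val_ne (show (1:ℕ) ≠ n - 1 by omega))).symm
    _ ≤ _ := Set.ncard_le_ncard hsub (Set.toFinite _)

/-- The only neighbors of `0` are `1` and `n-1`. -/
lemma nbr_zero (n : ℕ) (hn : 5 ≤ n) (y : Fin n)
    (h : ExAdj n ⟨0, by omega⟩ y ∨ ExAdj n y ⟨0, by omega⟩) :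
    y.val = 1 ∨ y.val = n - 1 := by
  rcases h with (h | ⟨h1, h2⟩ | ⟨h1, h2⟩) | (h | ⟨h1, h2⟩ | ⟨h1, h2⟩) <;> simp at * <;> omega

/-- Vertex `0` is noncritical. -/
lemma zero_noncritical (n : ℕ) (hn : 5 ≤ n) :
    Noncritical (ExAdj n) (⟨0, by omega⟩ : Fin n) := by
  set z : Fin n := ⟨0, by omega⟩ with hz
  have htopne : (⟨n - 1, by omega⟩ : Fin n) ≠ z := by simp [hz, Fin.ext_iff]; omega
  set top : {u : Fin n // u ≠ z} := ⟨⟨n - 1, by omega⟩, htopne⟩ with htop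
  have hreach : ∀ k (x : {u : Fin n // u ≠ z}), n - 1 - x.val.val ≤ k →
      Relation.ReflTransGen (fun a b : {u : Fin n // u ≠ z} => ExAdj n a b) x top := by
    intro k
    induction k with
    | zero =>
      intro x hx
      have hxv : x.val.val = n - 1 := by have := x.val.isLt; omega
      have : x = top := Subtype.ext (Fin.ext hxv)
      rw [this]
    | succ k ih =>
      intro x hx
      by_cases h : x.val.val = n - 1
      · have : x = top := Subtype.ext (Fin.ext h)
        rw [this]
      · have hlt : x.val.val + 1 < n := by have := x.val.isLt; omega
        have hne : (⟨x.val.val + 1, hlt⟩ : Fin n) ≠ z := by simp [hz, Fin.ext_iff]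
        refine Relation.ReflTransGen.head (b := ⟨⟨x.val.val + 1, hlt⟩, hne⟩)
          (Or.inl rfl) (ih _ (by simp; omega))
  intro x y
  have htopr := hreach _ x le_rfl
  by_cases hy : y = top
  · rw [hy]; exact htopr
  · have hyv : y.val.val < n - 1 := by
      have := y.val.isLt
      have : y.val.val ≠ n - 1 := by
        intro h
        exact hy (Subtype.ext (Fin.ext h))
      omega
    exact htopr.tail (Or.inr (Or.inl ⟨rfl, hyv⟩))

/-- Any vertex with positive value is critical. -/
lemma pos_critical (n : ℕ) (hn : 5 ≤ n) (v : Fin n) (hv : 0 < v.val) :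
    ¬ Noncritical (ExAdj n) v := by
  intro hnc
  by_cases hvtop : v.val = n - 1
  · -- removing the top: nothing can reach 0
    have h0ne : (⟨0, by omega⟩ : Fin n) ≠ v := by simp [Fin.ext_iff]; omega
    have h1ne : (⟨1, by omega⟩ : Fin n) ≠ v := by simp [Fin.ext_iff]; omega
    have hpath := hnc ⟨⟨1, by omega⟩, h1ne⟩ ⟨⟨0, by omega⟩, h0ne⟩
    -- invariant: value stays nonzero
    have hinv : ∀ (a b : {u : Fin n // u ≠ v}),
        Relation.ReflTransGen (fun a b : {u : Fin n // u ≠ v} => ExAdj n a b) a b →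
        0 < a.val.val → 0 < b.val.val := by
      intro a b hab ha
      induction hab with
      | refl => exact ha
      | @tail c d h1 h2 ih =>
        have hcv : c.val.val ≠ n - 1 := by
          intro h
          exact c.prop (Fin.ext (by omega))
        rcases h2 with h | ⟨hh1, hh2⟩ | ⟨hh1, hh2⟩
        · omega
        · exact absurd hh1 hcv
        · exact hh1
    have := hinv _ _ hpath (by simp)
    simp at this
  · -- removing a middle vertex: vertices below v cannot reach vertices above v
    have hvlt : v.val < n - 1 := by have := v.isLt; omega
    have h0ne : (⟨0, by omega⟩ : Fin n) ≠ v := by simp [Fin.ext_iff]; omega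
    have htne : (⟨n - 1, by omega⟩ : Fin n) ≠ v := by simp [Fin.ext_iff]; omega
    have hpath := hnc ⟨⟨0, by omega⟩, h0ne⟩ ⟨⟨n - 1, by omega⟩, htne⟩
    have hinv : ∀ (a b : {u : Fin n // u ≠ v}),
        Relation.ReflTransGen (fun a b : {u : Fin n // u ≠ v} => ExAdj n a b) a b →
        a.val.val < v.val → b.val.val < v.val := by
      intro a b hab ha
      induction hab with
      | refl => exact ha
      | @tail c d h1 h2 ih =>
        have hdv : d.val.val ≠ v.val := by
          intro h
          exact d.prop (Fin.ext h)
        rcases h2 with h | ⟨hh1, hh2⟩ | ⟨hh1, hh2⟩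
        · omega
        · omega
        · omega
    have := hinv _ _ hpath (by simpa using hv)
    simp at this
    omega

/-- For every `n ≥ 5` there is a strongly connected digraph on `n` vertices in
which every pair of adjacent vertices has degree sum at least `n + 1`, having
exactly one noncritical vertex: the bound `n + 2` on adjacent degree sums
guaranteeing two noncritical vertices is tight. -/
theorem exists_degree_sum_digraph_with_unique_noncritical (n : ℕ) (hn : 5 ≤ n) :
    ∃ Adj : Fin n → Fin n → Prop,
      (∀ x, ¬ Adj x x) ∧
      IsStronglyConnected Adj ∧
      (∀ x y, (Adj x y ∨ Adj y x) → n + 1 ≤ degree Adj x + degree Adj y) ∧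
      (∃! v, Noncritical Adj v) := by
  refine ⟨ExAdj n, exAdj_irrefl n, exAdj_strong n hn, ?_, ?_⟩
  · intro x y hxy
    by_cases hx0 : x.val = 0
    · have hx : x = (⟨0, by omega⟩ : Fin n) := Fin.ext hx0
      rw [hx] at hxy ⊢
      have hy := nbr_zero n hn y hxy
      have h1 : n - 1 ≤ degree (ExAdj n) y := deg_ge_full n hn y hy
      have h2 := deg_zero_ge n hn
      omega
    · by_cases hy0 : y.val = 0
      · have hy : y = (⟨0, by omega⟩ : Fin n) := Fin.ext hy0
        rw [hy] at hxy ⊢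
        have hx := nbr_zero n hn x (hxy.symm.imp id id)
        have h1 : n - 1 ≤ degree (ExAdj n) x := deg_ge_full n hn x hx
        have h2 := deg_zero_ge n hn
        omega
      · have h1 := deg_ge_mid n hn x (by omega)
        have h2 := deg_ge_mid n hn y (by omega)
        omega
  · refine ⟨⟨0, by omega⟩, zero_noncritical n hn, ?_⟩
    intro v hv
    by_contra hne
    have hv0 : 0 < v.val := by
      rcases Nat.eq_zero_or_pos v.val with h | h
      · exact absurd (Fin.ext h) hne
      · exact h
    exact pos_critical n hn v hv0 hv
end

section
/- For every integer n ≥ 4 there exists a strong tournament D on n vertices (a strongly connected digraph in which every pair of distinct vertices is joined by exactly one arc) that has exactly two noncritical vertices. (In particular, no lower bound on the minimal vertex degree can guarantee three noncritical vertices in a strongly connected digraph.) -/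
open Relation

theorem IsStronglyConnected.of_surjective {V W : Type*} {r : V → V → Prop} {s : W → W → Prop}
    (h : IsStronglyConnected r) (f : V → W) (hf : Function.Surjective f)
    (hrs : ∀ a b, r a b → s (f a) (f b)) : IsStronglyConnected s := by
  intro x y
  obtain ⟨a, rfl⟩ := hf x
  obtain ⟨b, rfl⟩ := hf y
  exact ReflTransGen.lift f hrs a b (h a b)

theorem not_isStronglyConnected_of_forward_closed {V : Type*} {r : V → V → Prop} (P : V → Prop)
    (hP : ∀ a b, r a b → P a → P b) {a b : V} (ha : P a) (hb : ¬ P b) :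
    ¬ IsStronglyConnected r := fun h => by
  induction h a b with
  | refl => exact hb ha
  | tail _ hcd ih => exact hb (hP _ _ hcd (by_contra ih))

def pathTournament (n : ℕ) (x y : Fin n) : Prop :=
  (y : ℕ) = x + 1 ∨ (y : ℕ) + 2 ≤ x

namespace pathTournament

theorem irrefl {n : ℕ} (x : Fin n) : ¬ pathTournament n x x := by
  unfold pathTournament; omega

theorem xor_of_ne {n : ℕ} {x y : Fin n} (hxy : x ≠ y) :
    Xor' (pathTournament n x y) (pathTournament n y x) := by
  have : (x : ℕ) ≠ y := Fin.val_ne_of_ne hxy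
  simp only [pathTournament, Xor', Xor]
  omega

theorem reflTransGen_zero_left {k : ℕ} (x : Fin (k + 1)) :
    ReflTransGen (pathTournament (k + 1)) 0 x := by
  induction x using Fin.induction with
  | zero => rfl
  | succ i ih => exact ih.tail (Or.inl (by simp))

theorem reflTransGen_zero_right {k : ℕ} (hk : 2 ≤ k) (x : Fin (k + 1)) :
    ReflTransGen (pathTournament (k + 1)) x 0 := by
  rcases x with ⟨_ | _ | x, hx⟩
  · rfl
  · exact .head (b := ⟨2, by omega⟩) (Or.inl rfl) (.single (Or.inr (by simp)))
  · exact .single (Or.inr (by simp))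

theorem isStronglyConnected {n : ℕ} (hn : 3 ≤ n) : IsStronglyConnected (pathTournament n) := by
  obtain ⟨k, rfl⟩ : ∃ k, n = k + 1 := ⟨n - 1, by omega⟩
  exact fun x y => (reflTransGen_zero_right (by omega) x).trans (reflTransGen_zero_left y)

theorem noncritical_zero {k : ℕ} (hk : 2 ≤ k) : Noncritical (pathTournament (k + 2)) 0 := by
  refine (isStronglyConnected (n := k + 1) (by omega)).of_surjective
    (fun i => ⟨i.succ, i.succ_ne_zero⟩) (fun u => ⟨u.1.pred u.2, by simp⟩) ?_
  intro a b hab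
  simp only [pathTournament, Fin.val_succ] at hab ⊢
  omega

theorem noncritical_last {k : ℕ} (hk : 2 ≤ k) :
    Noncritical (pathTournament (k + 2)) (Fin.last (k + 1)) :=
  (isStronglyConnected (n := k + 1) (by omega)).of_surjective
    (fun i => ⟨i.castSucc, i.castSucc_ne_last⟩) (fun u => ⟨u.1.castPred u.2, by simp⟩)
    (fun _ _ hab => hab)

theorem not_noncritical_of_pos_of_lt_last {n : ℕ} {v : Fin n} (hv₀ : 0 < (v : ℕ))
    (hv : (v : ℕ) + 1 < n) : ¬ Noncritical (pathTournament n) v := by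
  refine not_isStronglyConnected_of_forward_closed (fun u => (u.1 : ℕ) < v) ?_
    (a := ⟨⟨v - 1, by omega⟩, fun h => by simp [Fin.ext_iff] at h; omega⟩)
    (b := ⟨⟨v + 1, hv⟩, fun h => by simp [Fin.ext_iff] at h⟩) (by simp; omega) (by simp)
  rintro a ⟨b, hb⟩ hab ha
  have : (b : ℕ) ≠ v := Fin.val_ne_of_ne hb
  simp only [pathTournament] at hab ⊢
  omega

theorem noncritical_iff {k : ℕ} (hk : 2 ≤ k) (v : Fin (k + 2)) :
    Noncritical (pathTournament (k + 2)) v ↔ v = 0 ∨ v = Fin.last (k + 1) := by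
  refine ⟨fun hv => ?_, ?_⟩
  · by_contra! h
    refine not_noncritical_of_pos_of_lt_last ?_ ?_ hv
    · exact Nat.pos_of_ne_zero (Fin.val_ne_of_ne h.1)
    · have := Fin.val_ne_of_ne h.2
      simp only [Fin.val_last] at this
      omega
  · rintro (rfl | rfl)
    exacts [noncritical_zero hk, noncritical_last hk]

end pathTournament

/-- For every `n ≥ 4` there is a strong tournament on `n` vertices (a strongly
connected digraph in which any two distinct vertices are joined by exactly one
arc) with exactly two noncritical vertices. -/
theorem exists_strong_tournament_with_exactly_two_noncritical (n : ℕ) (hn : 4 ≤ n) :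
    ∃ Adj : Fin n → Fin n → Prop,
      (∀ x, ¬ Adj x x) ∧
      (∀ x y : Fin n, x ≠ y → Xor' (Adj x y) (Adj y x)) ∧
      IsStronglyConnected Adj ∧
      (∃ v₁ v₂ : Fin n, v₁ ≠ v₂ ∧ Noncritical Adj v₁ ∧ Noncritical Adj v₂ ∧
        ∀ v, Noncritical Adj v → v = v₁ ∨ v = v₂) := by
  obtain ⟨k, rfl⟩ : ∃ k, n = k + 2 := ⟨n - 2, by omega⟩
  have hk : 2 ≤ k := by omega
  refine ⟨pathTournament (k + 2), pathTournament.irrefl, fun _ _ => pathTournament.xor_of_ne,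
    pathTournament.isStronglyConnected (by omega), 0, Fin.last (k + 1), (Fin.last_pos).ne,
    pathTournament.noncritical_zero hk, pathTournament.noncritical_last hk,
    fun v => (pathTournament.noncritical_iff hk v).mp⟩
end
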